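/- arXiv:2112.10286 — 5 statements merged into one kernel-verified Lean document; each statement's English description precedes it below -/
import Mathlib

section
/- There exist constants c ∈ ℝ and C > 0 such that for all α ∈ (−a, a) and all sufficiently small ε > 0: (i) g_l(α, p̂) = 0 for every p̂ < c; and (ii) |g_l(α, p̂)| ≤ C p̂^{−1/2} for every p̂ ≥ 1. The constants c and C are uniform with respect to α ∈ (−a, a) and ε > 0 sufficiently small. -/
/-!
By (H1) `|H₀| ≤ c₀`, so the inner integral runs over an interval of length at most `c₀`: it is
bounded by `c₀ sup |w|` and vanishes unless `|p̂ − (R₀/2)ν²| ≤ K := L + c₀`, where `[−L, L]`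
contains the support of `w`. For `p̂ < −K` this never happens. Otherwise `|ν|` is confined to
`[r₁, r₂]` with `rᵢ = √(2(p̂ ∓ K)/R₀)`, and `√p̂ (√(p̂ + K) − √(p̂ − K)) ≤ 2K` gives
`r₂ − r₁ = O(p̂^{−1/2})`.
-/

open MeasureTheory

theorem Real.sqrt_mul_sqrt_add_sub_sqrt_sub_le {p K : ℝ} (hp : 0 ≤ p) (hK : 0 ≤ K) :
    √p * (√(p + K) - √(p - K)) ≤ 2 * K := by
  have hp_le : √p ≤ √(p + K) := Real.sqrt_le_sqrt (by linarith)
  have hsub_le : √(p - K) ≤ √(p + K) := Real.sqrt_le_sqrt (by linarith)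
  have hsq_add : √(p + K) ^ 2 = p + K := Real.sq_sqrt (by linarith)
  have hsq_sub : p - K ≤ √(p - K) ^ 2 := by rw [Real.sq_sqrt']; exact le_max_left _ _
  nlinarith [Real.sqrt_nonneg p, Real.sqrt_nonneg (p - K)]

theorem volume_setOf_abs_mem_Icc_le (r₁ r₂ : ℝ) :
    volume {ν : ℝ | |ν| ∈ Set.Icc r₁ r₂} ≤ ENNReal.ofReal (2 * (r₂ - r₁)) := by
  rcases lt_or_ge r₂ r₁ with h | h
  · have hempty : {ν : ℝ | |ν| ∈ Set.Icc r₁ r₂} = ∅ := by simp [Set.Icc_eq_empty_of_lt h]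
    rw [hempty, measure_empty]
    exact zero_le
  have hsub : {ν : ℝ | |ν| ∈ Set.Icc r₁ r₂} ⊆ Set.Icc (-r₂) (-r₁) ∪ Set.Icc r₁ r₂ := by
    intro ν ⟨h₁, h₂⟩
    rcases le_or_gt 0 ν with hν | hν
    · rw [abs_of_nonneg hν] at h₁ h₂; exact Or.inr ⟨h₁, h₂⟩
    · rw [abs_of_neg hν] at h₁ h₂; exact Or.inl ⟨by linarith, by linarith⟩
  calc volume {ν : ℝ | |ν| ∈ Set.Icc r₁ r₂}
      ≤ volume (Set.Icc (-r₂) (-r₁)) + volume (Set.Icc r₁ r₂) :=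
        (measure_mono hsub).trans (measure_union_le _ _)
    _ = ENNReal.ofReal (2 * (r₂ - r₁)) := by
        rw [Real.volume_Icc, Real.volume_Icc, ← ENNReal.ofReal_add (by linarith) (by linarith)]
        ring_nf

theorem volume_setOf_abs_sub_mul_sq_le {c p K : ℝ} (hc : 0 < c) (hp : 0 < p) (hK : 0 ≤ K) :
    volume {ν : ℝ | |p - c * ν ^ 2| ≤ K} ≤ ENNReal.ofReal (4 * K / √(c * p)) := by
  have hsub : {ν : ℝ | |p - c * ν ^ 2| ≤ K} ⊆
      {ν : ℝ | |ν| ∈ Set.Icc (√((p - K) / c)) (√((p + K) / c))} := by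
    intro ν (hν : |p - c * ν ^ 2| ≤ K)
    obtain ⟨h₁, h₂⟩ := abs_le.mp hν
    show |ν| ∈ Set.Icc _ _
    rw [← Real.sqrt_sq_eq_abs]
    constructor <;> apply Real.sqrt_le_sqrt
    · rw [div_le_iff₀ hc]; linarith
    · rw [le_div_iff₀ hc]; linarith
  refine (measure_mono hsub).trans ((volume_setOf_abs_mem_Icc_le _ _).trans
    (ENNReal.ofReal_le_ofReal ?_))
  have key := Real.sqrt_mul_sqrt_add_sub_sqrt_sub_le hp.le hK
  have hsc : 0 < √c := Real.sqrt_pos.mpr hc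
  have hsp : 0 < √p := Real.sqrt_pos.mpr hp
  rw [Real.sqrt_div' _ hc.le, Real.sqrt_div' _ hc.le, Real.sqrt_mul hc.le,
    ← sub_div, mul_div_assoc', div_le_div_iff₀ hsc (mul_pos hsc hsp)]
  nlinarith

theorem intervalIntegral_comp_sub_eq_zero_of_add_abs_le {w : ℝ → ℝ} {L s b : ℝ}
    (hw : ∀ x, L ≤ |x| → w x = 0) (h : L + |b| ≤ |s|) :
    ∫ t in (0 : ℝ)..b, w (s - t) = 0 := by
  rw [intervalIntegral.integral_congr (g := fun _ ↦ 0), intervalIntegral.integral_zero]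
  intro t ht
  have ht_le : |t| ≤ |b| := by
    rcases Set.mem_uIcc.mp ht with ⟨h₀, h₁⟩ | ⟨h₀, h₁⟩
    · rw [abs_of_nonneg h₀, abs_of_nonneg (h₀.trans h₁)]; exact h₁
    · rw [abs_of_nonpos h₁, abs_of_nonpos (h₀.trans h₁)]; linarith
  exact hw _ (by linarith [abs_sub_abs_le_abs_sub s t])

section ParabolicSmearing

variable {w b : ℝ → ℝ} {L M B c p : ℝ}

theorem integral_intervalIntegral_eq_zero_of_le (hw : ∀ x, L ≤ |x| → w x = 0)
    (hb : ∀ ν, |b ν| ≤ B) (hc : 0 ≤ c) (hp : p ≤ -(L + B)) :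
    ∫ ν, ∫ t in (0 : ℝ)..b ν, w (p - c * ν ^ 2 - t) = 0 := by
  have hinner : ∀ ν, ∫ t in (0 : ℝ)..b ν, w (p - c * ν ^ 2 - t) = 0 := fun ν ↦
    intervalIntegral_comp_sub_eq_zero_of_add_abs_le hw <| by
      have : 0 ≤ c * ν ^ 2 := by positivity
      linarith [hb ν, neg_le_abs (p - c * ν ^ 2)]
  simp only [hinner, integral_zero]

theorem abs_integral_intervalIntegral_le (hw : ∀ x, L ≤ |x| → w x = 0) (hL : 0 ≤ L)
    (hM : ∀ x, |w x| ≤ M) (hb : ∀ ν, |b ν| ≤ B) (hc : 0 < c) (hp : 0 < p) :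
    |∫ ν, ∫ t in (0 : ℝ)..b ν, w (p - c * ν ^ 2 - t)| ≤ M * B * (4 * (L + B) / √(c * p)) := by
  have hB : 0 ≤ B := (abs_nonneg _).trans (hb 0)
  have hMB : 0 ≤ M * B := mul_nonneg ((abs_nonneg _).trans (hM 0)) hB
  have hvol := volume_setOf_abs_sub_mul_sq_le hc hp (add_nonneg hL hB)
  have hvanish : ∀ ν ∉ {ν : ℝ | |p - c * ν ^ 2| ≤ L + B},
      ∫ t in (0 : ℝ)..b ν, w (p - c * ν ^ 2 - t) = 0 := fun ν (hν : ¬|p - c * ν ^ 2| ≤ L + B) ↦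
    intervalIntegral_comp_sub_eq_zero_of_add_abs_le hw <| by
      linarith [hb ν, not_le.mp hν]
  have hinner : ∀ ν, ‖∫ t in (0 : ℝ)..b ν, w (p - c * ν ^ 2 - t)‖ ≤ M * B := fun ν ↦
    calc _ ≤ M * |b ν - 0| :=
          intervalIntegral.norm_integral_le_of_norm_le_const fun t _ ↦ hM _
      _ ≤ M * B := by
          rw [sub_zero]; exact mul_le_mul_of_nonneg_left (hb ν) ((abs_nonneg _).trans (hM 0))
  rw [← Real.norm_eq_abs, ← setIntegral_eq_integral_of_forall_compl_eq_zero hvanish]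
  calc _ ≤ M * B * volume.real {ν : ℝ | |p - c * ν ^ 2| ≤ L + B} :=
        norm_setIntegral_le_of_norm_le_const (hvol.trans_lt ENNReal.ofReal_lt_top)
          fun ν _ ↦ hinner ν
    _ ≤ M * B * (4 * (L + B) / √(c * p)) :=
        mul_le_mul_of_nonneg_left (ENNReal.toReal_le_of_le_ofReal (by positivity) hvol) hMB

end ParabolicSmearing

theorem stmt_2_general (a c₀ ε₀ D R₀ : ℝ) (w : ℝ → ℝ) (H : ℝ → ℝ → ℝ)
    (hε₀ : 0 < ε₀)
    (hR₀ : 0 < R₀)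
    -- the detector aperture function w ∈ C₀²(ℝ), even, with ∫ w = 1
    (hw_supp : HasCompactSupport w)
    (hw_d1 : ∀ p : ℝ, DifferentiableAt ℝ w p)
    -- the perturbation family: H1 and H2
    (hH1 : ∀ ε ∈ Set.Ioo (0:ℝ) ε₀, ∀ s : ℝ, |H ε s| ≤ c₀ * ε)
    -- the leading term g_l
    (gl : ℝ → ℝ → ℝ → ℝ)
    (hgl : ∀ ε α p : ℝ, gl ε α p = D * R₀ *
      ∫ ν : ℝ, ∫ t in (0:ℝ)..(ε⁻¹ * H ε (α + Real.sqrt ε * ν)),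
        w (p - R₀ / 2 * ν ^ 2 - t)) :
    ∃ c C : ℝ, 0 < C ∧ ∃ ε₁ : ℝ, 0 < ε₁ ∧ ε₁ ≤ ε₀ ∧
      ∀ ε ∈ Set.Ioo (0:ℝ) ε₁, ∀ α ∈ Set.Ioo (-a) a,
        (∀ p : ℝ, p < c → gl ε α p = 0) ∧
        (∀ p : ℝ, 1 ≤ p → |gl ε α p| ≤ C * p ^ (-(1:ℝ)/2)) := by
  obtain ⟨M, hM⟩ := (Differentiable.continuous hw_d1).bounded_above_of_compact_support hw_supp
  obtain ⟨L, hL, hw_zero⟩ := hw_supp.exists_pos_le_norm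
  have hH₀ : ∀ ε ∈ Set.Ioo (0:ℝ) ε₀, ∀ s, |ε⁻¹ * H ε s| ≤ c₀ := fun ε hε s ↦ by
    rw [abs_mul, abs_inv, abs_of_pos hε.1, inv_mul_le_iff₀ hε.1, mul_comm]
    exact hH1 ε hε s
  have hR₀2 : 0 < R₀ / 2 := half_pos hR₀
  refine ⟨-(L + c₀), max (|D * R₀| * (M * c₀ * (4 * (L + c₀) / √(R₀ / 2)))) 1,
    by positivity, ε₀, hε₀, le_rfl, fun ε hε α _ ↦ ⟨fun p hp ↦ ?_, fun p hp ↦ ?_⟩⟩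
  · rw [hgl, integral_intervalIntegral_eq_zero_of_le hw_zero (fun ν ↦ hH₀ ε hε _) hR₀2.le hp.le,
      mul_zero]
  · have hp₀ : 0 < p := one_pos.trans_le hp
    have hrpow : 4 * (L + c₀) / √(R₀ / 2 * p) = 4 * (L + c₀) / √(R₀ / 2) * p ^ (-(1:ℝ)/2) := by
      rw [Real.sqrt_mul hR₀2.le, neg_div, Real.rpow_neg hp₀.le, ← Real.sqrt_eq_rpow,
        div_mul_eq_div_div, div_eq_mul_inv _ (√p)]
    rw [hgl, abs_mul]
    calc _ ≤ |D * R₀| * (M * c₀ * (4 * (L + c₀) / √(R₀ / 2 * p))) :=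
          mul_le_mul_of_nonneg_left (abs_integral_intervalIntegral_le hw_zero hL.le (fun x ↦ hM x)
            (fun ν ↦ hH₀ ε hε _) hR₀2 hp₀) (abs_nonneg _)
      _ = |D * R₀| * (M * c₀ * (4 * (L + c₀) / √(R₀ / 2))) * p ^ (-(1:ℝ)/2) := by
          rw [hrpow]; ring
      _ ≤ _ := mul_le_mul_of_nonneg_right (le_max_left _ _) (by positivity)

/-- support and decay of the leading data term
`g_l(α,p̂) = D R₀ ∫_ℝ ∫₀^{H₀(α̃+ν)} w(p̂ − (R₀/2)ν² − t) dt dν`: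
there exist `c` and `C > 0`, uniform in `α ∈ (−a,a)` and sufficiently small
`ε > 0`, such that `g_l(α,p̂) = 0` for `p̂ < c` and `|g_l(α,p̂)| ≤ C p̂^{−1/2}`
for `p̂ ≥ 1`.  (Here `H₀(s) = ε⁻¹ H_ε(ε^{1/2} s)`, so that
`H₀(α/ε^{1/2} + ν) = ε⁻¹ H_ε(α + ε^{1/2} ν)`, and the inner integral is signed.) -/
theorem stmt_2 (γ a c₀ ε₀ D R₀ : ℝ) (w : ℝ → ℝ) (H : ℝ → ℝ → ℝ)
    (hγ : γ ∈ Set.Ioc (0:ℝ) 1) (ha : 0 < a) (hc₀ : 0 < c₀) (hε₀ : 0 < ε₀)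
    (hR₀ : 0 < R₀)
    -- the detector aperture function w ∈ C₀²(ℝ), even, with ∫ w = 1
    (hw_even : ∀ p : ℝ, w (-p) = w p)
    (hw_supp : HasCompactSupport w)
    (hw_d1 : ∀ p : ℝ, DifferentiableAt ℝ w p)
    (hw_d2 : ∀ p : ℝ, DifferentiableAt ℝ (deriv w) p)
    (hw_bdd : ∃ M : ℝ, ∀ᵐ p : ℝ, |deriv (deriv w) p| ≤ M)
    (hw_int : ∫ p : ℝ, w p = 1)
    -- the perturbation family: H1 and H2
    (hH1 : ∀ ε ∈ Set.Ioo (0:ℝ) ε₀, ∀ s : ℝ, |H ε s| ≤ c₀ * ε)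
    (hH2 : ∀ ε ∈ Set.Ioo (0:ℝ) ε₀, ∀ s h : ℝ, 0 < h →
      |H ε (s + Real.sqrt ε * h) - H ε s| ≤ c₀ * ε * h ^ γ)
    -- the leading term g_l
    (gl : ℝ → ℝ → ℝ → ℝ)
    (hgl : ∀ ε α p : ℝ, gl ε α p = D * R₀ *
      ∫ ν : ℝ, ∫ t in (0:ℝ)..(ε⁻¹ * H ε (α + Real.sqrt ε * ν)),
        w (p - R₀ / 2 * ν ^ 2 - t)) :
    ∃ c C : ℝ, 0 < C ∧ ∃ ε₁ : ℝ, 0 < ε₁ ∧ ε₁ ≤ ε₀ ∧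
      ∀ ε ∈ Set.Ioo (0:ℝ) ε₁, ∀ α ∈ Set.Ioo (-a) a,
        (∀ p : ℝ, p < c → gl ε α p = 0) ∧
        (∀ p : ℝ, 1 ≤ p → |gl ε α p| ≤ C * p ^ (-(1:ℝ)/2)) :=
  stmt_2_general a c₀ ε₀ D R₀ w H hε₀ hR₀ hw_supp hw_d1 hH1 gl hgl
end

section
/- Fix any δ ∈ (0, 1/2). There exist constants C > 0 and P₀ ≥ 1 such that for all p̂ ≥ P₀, all Δp̂ with |Δp̂| ≤ p̂^δ, all α ∈ (−a, a), and all sufficiently small ε > 0: |g_l(α, p̂ + Δp̂) − g_l(α, p̂)| ≤ C |Δp̂|^γ p̂^{−(1+γ)/2}. The constants C, P₀ are uniform with respect to α ∈ (−a, a) and ε > 0 sufficiently small. -/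
open MeasureTheory

namespace Stmt3Aux


lemma sqrt_diff_le {x y m : ℝ} (hm : 0 < m) (hx : m ≤ x) (hy : m ≤ y) :
    |Real.sqrt x - Real.sqrt y| ≤ |x - y| / (2 * Real.sqrt m) := by
  have hx0 : (0:ℝ) ≤ x := le_trans hm.le hx
  have hy0 : (0:ℝ) ≤ y := le_trans hm.le hy
  have hsm : 0 < Real.sqrt m := Real.sqrt_pos.2 hm
  have hxr : Real.sqrt m ≤ Real.sqrt x := Real.sqrt_le_sqrt hx
  have hyr : Real.sqrt m ≤ Real.sqrt y := Real.sqrt_le_sqrt hy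
  have hsum : 0 < Real.sqrt x + Real.sqrt y := by linarith
  have key : |Real.sqrt x - Real.sqrt y| * (Real.sqrt x + Real.sqrt y) = |x - y| := by
    rw [← abs_of_pos hsum, ← abs_mul]
    congr 1
    have h1 : Real.sqrt x * Real.sqrt x = x := Real.mul_self_sqrt hx0
    have h2 : Real.sqrt y * Real.sqrt y = y := Real.mul_self_sqrt hy0
    nlinarith [h1, h2]
  have h2m : 2 * Real.sqrt m ≤ Real.sqrt x + Real.sqrt y := by linarith
  rw [le_div_iff₀ (by positivity), ← key]
  exact mul_le_mul_of_nonneg_left h2m (abs_nonneg _)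

lemma inv_sqrt_diff_le {x y m : ℝ} (hm : 0 < m) (hx : m ≤ x) (hy : m ≤ y) :
    |1 / Real.sqrt x - 1 / Real.sqrt y| ≤ |x - y| / (2 * m * Real.sqrt m) := by
  have hx0 : (0:ℝ) < x := lt_of_lt_of_le hm hx
  have hy0 : (0:ℝ) < y := lt_of_lt_of_le hm hy
  have hsx : 0 < Real.sqrt x := Real.sqrt_pos.2 hx0
  have hsy : 0 < Real.sqrt y := Real.sqrt_pos.2 hy0
  have hsm : 0 < Real.sqrt m := Real.sqrt_pos.2 hm
  have hxr : Real.sqrt m ≤ Real.sqrt x := Real.sqrt_le_sqrt hx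
  have hyr : Real.sqrt m ≤ Real.sqrt y := Real.sqrt_le_sqrt hy
  have heq : 1 / Real.sqrt x - 1 / Real.sqrt y
      = (Real.sqrt y - Real.sqrt x) / (Real.sqrt x * Real.sqrt y) := by
    field_simp
  have hprod : 0 < Real.sqrt x * Real.sqrt y := by positivity
  rw [heq, abs_div, abs_of_pos hprod]
  have h1 : |Real.sqrt y - Real.sqrt x| ≤ |x - y| / (2 * Real.sqrt m) := by
    have := sqrt_diff_le hm hy hx
    rwa [abs_sub_comm y x] at this
  have h2 : m ≤ Real.sqrt x * Real.sqrt y := by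
    calc m = Real.sqrt m * Real.sqrt m := (Real.mul_self_sqrt hm.le).symm
      _ ≤ Real.sqrt x * Real.sqrt y := mul_le_mul hxr hyr hsm.le hsx.le
  calc |Real.sqrt y - Real.sqrt x| / (Real.sqrt x * Real.sqrt y)
      ≤ (|x - y| / (2 * Real.sqrt m)) / m := div_le_div₀ (by positivity) h1 hm h2
    _ = |x - y| / (2 * m * Real.sqrt m) := by ring

lemma continuous_of_holder {f : ℝ → ℝ} {c γ : ℝ} (hγ : 0 < γ)
    (h : ∀ x y : ℝ, |f x - f y| ≤ c * |x - y| ^ γ) : Continuous f := by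
  rw [continuous_iff_continuousAt]
  intro x₀
  rw [ContinuousAt, tendsto_iff_dist_tendsto_zero]
  have habs : Filter.Tendsto (fun x : ℝ => |x - x₀|) (nhds x₀) (nhds 0) := by
    have h0 : Filter.Tendsto (fun x : ℝ => x - x₀) (nhds x₀) (nhds 0) := by
      have := Filter.Tendsto.sub_const (Filter.tendsto_id (x := nhds x₀)) x₀
      simpa using this
    simpa using h0.abs
  have h2 : Filter.Tendsto (fun x : ℝ => c * |x - x₀| ^ γ) (nhds x₀)
      (nhds (c * (0:ℝ) ^ γ)) := by
    apply Filter.Tendsto.const_mul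
    exact ((Real.continuousAt_rpow_const 0 γ (Or.inr hγ.le)).tendsto).comp habs
  rw [Real.zero_rpow (ne_of_gt hγ), mul_zero] at h2
  exact squeeze_zero (fun x => dist_nonneg)
    (fun x => by rw [Real.dist_eq]; exact h x x₀) h2



lemma T1bound (K₁ M γ p d : ℝ) (hK₁ : 0 < K₁) (hM : 0 ≤ M) (hp : 0 < p)
    (hd : 0 ≤ d) (hγ : 0 < γ) (hγ1 : γ ≤ 1) :
    (K₁/Real.sqrt p) * (M * (K₁*d/Real.sqrt p)^γ)
      ≤ (max 1 K₁)^2 * M * d^γ * p^(-(1+γ)/2) := by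
  have hS : Real.sqrt p = p ^ (1/2:ℝ) := Real.sqrt_eq_rpow p
  have hSpos : (0:ℝ) < Real.sqrt p := Real.sqrt_pos.2 hp
  have hexp : (K₁*d/Real.sqrt p)^γ = K₁^γ * d^γ / (Real.sqrt p)^γ := by
    rw [Real.div_rpow (by positivity) hSpos.le, Real.mul_rpow hK₁.le hd]
  have e1 : Real.sqrt p * (Real.sqrt p)^γ = p ^ ((1+γ)/2 : ℝ) := by
    nth_rewrite 1 [← Real.rpow_one (Real.sqrt p)]
    rw [← Real.rpow_add hSpos, hS, ← Real.rpow_mul hp.le]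
    ring_nf
  have h2 : p^(-(1+γ)/2) = 1 / (Real.sqrt p * (Real.sqrt p)^γ) := by
    rw [e1, show (-(1+γ)/2 : ℝ) = -((1+γ)/2) by ring, Real.rpow_neg hp.le,
      one_div]
  have hrw : (K₁/Real.sqrt p) * (M * (K₁*d/Real.sqrt p)^γ)
      = (K₁^(1+γ:ℝ)) * M * d^γ * p^(-(1+γ)/2) := by
    rw [hexp, h2, Real.rpow_add hK₁, Real.rpow_one]
    field_simp
  rw [hrw]
  have hKle : K₁^(1+γ:ℝ) ≤ (max 1 K₁)^2 := by
    calc K₁^(1+γ:ℝ) ≤ (max 1 K₁)^(1+γ:ℝ) :=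
          Real.rpow_le_rpow hK₁.le (le_max_right _ _) (by linarith)
      _ ≤ (max 1 K₁)^(2:ℝ) :=
          Real.rpow_le_rpow_of_exponent_le (le_max_left _ _) (by linarith)
      _ = (max 1 K₁)^2 := by
          rw [show (2:ℝ) = ((2:ℕ):ℝ) by norm_num, Real.rpow_natCast]
  gcongr

lemma T2bound (K₁ M γ p d : ℝ) (hK₁ : 0 ≤ K₁) (hM : 0 ≤ M) (hp : 1 ≤ p)
    (hd : 0 < d) (hdp : d ≤ Real.sqrt p) (hγ : 0 < γ) (hγ1 : γ ≤ 1) :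
    (K₁*d/(p*Real.sqrt p)) * M ≤ K₁ * M * d^γ * p^(-(1+γ)/2) := by
  have hp0 : (0:ℝ) < p := lt_of_lt_of_le one_pos hp
  have hS : Real.sqrt p = p ^ (1/2:ℝ) := Real.sqrt_eq_rpow p
  have hd1 : d = d^γ * d^(1-γ:ℝ) := by
    rw [← Real.rpow_add hd, add_sub_cancel, Real.rpow_one]
  have hd2 : d^(1-γ:ℝ) ≤ p^((1-γ)/2:ℝ) := by
    calc d^(1-γ:ℝ) ≤ (Real.sqrt p)^(1-γ:ℝ) :=
          Real.rpow_le_rpow hd.le hdp (by linarith)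
      _ = p^((1-γ)/2:ℝ) := by
          rw [hS, ← Real.rpow_mul hp0.le]; ring_nf
  have hps : p * Real.sqrt p = p^(3/2:ℝ) := by
    nth_rewrite 1 [← Real.rpow_one p]
    rw [hS, ← Real.rpow_add hp0]
    norm_num
  have h3 : p^((1-γ)/2:ℝ) / p^(3/2:ℝ) = p^(-1-γ/2 : ℝ) := by
    rw [← Real.rpow_sub hp0]; ring_nf
  have h4 : p^(-1-γ/2:ℝ) ≤ p^(-(1+γ)/2) :=
    Real.rpow_le_rpow_of_exponent_le hp (by linarith)
  have hp32 : (0:ℝ) < p^(3/2:ℝ) := Real.rpow_pos_of_pos hp0 _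
  calc (K₁*d/(p*Real.sqrt p)) * M
      = K₁*M*(d^γ * d^(1-γ:ℝ)) / p^(3/2:ℝ) := by rw [hps, ← hd1]; ring
    _ ≤ K₁*M*(d^γ * p^((1-γ)/2:ℝ)) / p^(3/2:ℝ) := by
        gcongr
    _ = K₁*M*d^γ * (p^((1-γ)/2:ℝ) / p^(3/2:ℝ)) := by ring
    _ = K₁*M*d^γ * p^(-1-γ/2:ℝ) := by rw [h3]
    _ ≤ K₁*M*d^γ * p^(-(1+γ)/2) := by
        gcongr
    _ = K₁ * M * d^γ * p^(-(1+γ)/2) := by ring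



lemma half_eq (R₀ c₀ K : ℝ) (hR₀ : 0 < R₀) (hc₀ : 0 < c₀) (hK : 0 < K)
    (W : ℝ → ℝ) (hWcont : Continuous W)
    (hWr : ∀ x, K ≤ x → W x = W K) (hWl : ∀ x, x ≤ -K → W x = W (-K))
    (β : ℝ → ℝ) (hβb : ∀ ν, |β ν| ≤ c₀) (hβcont : Continuous β)
    (q : ℝ) (hq : K + c₀ < q) :
    ∫ ν in Set.Ioi (0:ℝ), (W (q - R₀/2*ν^2) - W (q - R₀/2*ν^2 - β ν))
      = ∫ u in (q - (K + c₀))..(q + (K + c₀)),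
          ((2/R₀)/(2*Real.sqrt ((2/R₀)*u))) *
            (W (q - u) - W (q - u - β (Real.sqrt ((2/R₀)*u)))) := by
  set A := K + c₀ with hA
  have hA0 : 0 < A := by positivity
  set a := q - A with ha
  set b := q + A with hb
  have ha0 : 0 < a := by simp [ha]; linarith
  have hb0 : 0 < b := by simp [hb]; linarith
  have hab : a ≤ b := by simp [ha, hb]; linarith
  set g : ℝ → ℝ := fun ν => W (q - R₀/2*ν^2) - W (q - R₀/2*ν^2 - β ν) with hg
  have hgcont : Continuous g := by
    apply Continuous.sub
    · exact hWcont.comp (by fun_prop)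
    · exact hWcont.comp (by fun_prop)
  -- vanishing of g
  have hzero : ∀ ν : ℝ, (R₀/2*ν^2 ≤ a ∨ b ≤ R₀/2*ν^2) → g ν = 0 := by
    intro ν hν
    have hβν := abs_le.1 (hβb ν)
    rcases hν with h | h
    · have h1 : K ≤ q - R₀/2*ν^2 := by simp [ha, hA] at h ⊢; linarith
      have h2 : K ≤ q - R₀/2*ν^2 - β ν := by simp [ha, hA] at h ⊢; linarith
      simp [hg, hWr _ h1, hWr _ h2]
    · have h1 : q - R₀/2*ν^2 ≤ -K := by simp [hb, hA] at h ⊢; linarith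
      have h2 : q - R₀/2*ν^2 - β ν ≤ -K := by simp [hb, hA] at h ⊢; linarith
      simp [hg, hWl _ h1, hWl _ h2]
  set f : ℝ → ℝ := fun u => Real.sqrt ((2/R₀)*u) with hf
  have hfa : 0 < f a := Real.sqrt_pos.2 (by positivity)
  have hfmono : f a ≤ f b := Real.sqrt_le_sqrt (by
    apply mul_le_mul_of_nonneg_left hab (by positivity))
  -- Step A : restrict to Ioc (f a) (f b)
  have stepA : ∫ ν in Set.Ioi (0:ℝ), g ν = ∫ ν in Set.Ioc (f a) (f b), g ν := by
    apply setIntegral_eq_of_subset_of_forall_diff_eq_zero measurableSet_Ioi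
    · intro x hx
      exact lt_of_le_of_lt hfa.le hx.1 |>.trans_le le_rfl
    · intro x hx
      obtain ⟨hx0, hx1⟩ := hx
      apply hzero
      by_cases hcase : x ≤ f a
      · left
        have hx0' : (0:ℝ) ≤ x := le_of_lt hx0
        have : x^2 ≤ (f a)^2 := by
          apply pow_le_pow_left₀ hx0' hcase
        rw [hf, Real.sq_sqrt (by positivity : (0:ℝ) ≤ (2/R₀)*a)] at this
        calc R₀/2*x^2 ≤ R₀/2*((2/R₀)*a) := by nlinarith
          _ = a := by field_simp
      · right
        have hcase' : f b < x := by
          simp only [Set.mem_Ioc, not_and, not_le] at hx1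
          exact hx1 (lt_of_not_ge hcase)
        have : (f b)^2 ≤ x^2 := by
          apply pow_le_pow_left₀ (Real.sqrt_nonneg _) hcase'.le
        rw [hf, Real.sq_sqrt (by positivity : (0:ℝ) ≤ (2/R₀)*b)] at this
        calc b = R₀/2*((2/R₀)*b) := by field_simp
          _ ≤ R₀/2*x^2 := by nlinarith
  -- Step B : interval integral
  have stepB : ∫ ν in Set.Ioc (f a) (f b), g ν = ∫ ν in (f a)..(f b), g ν :=
    (intervalIntegral.integral_of_le hfmono).symm
  -- Step C : substitution
  set f' : ℝ → ℝ := fun u => (2/R₀)/(2*Real.sqrt ((2/R₀)*u)) with hf'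
  have stepC : ∫ u in a..b, f' u • g (f u) = ∫ ν in (f a)..(f b), g ν := by
    apply intervalIntegral.integral_comp_smul_deriv _ _ hgcont
    · intro x hx
      rw [Set.uIcc_of_le hab] at hx
      have hx0 : 0 < x := lt_of_lt_of_le ha0 hx.1
      have hne : (2/R₀)*x ≠ 0 := by positivity
      have h1 : HasDerivAt (fun u : ℝ => (2/R₀)*u) (2/R₀) x := by
        simpa using (hasDerivAt_id x).const_mul (2/R₀)
      exact h1.sqrt hne
    · rw [Set.uIcc_of_le hab]
      apply ContinuousOn.div continuousOn_const
      · fun_prop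
      · intro x hx
        have hx0 : 0 < x := lt_of_lt_of_le ha0 hx.1
        have : 0 < Real.sqrt ((2/R₀)*x) := Real.sqrt_pos.2 (by positivity)
        positivity
  -- Step D : rewrite the integrand
  have stepD : ∫ u in a..b, f' u • g (f u)
      = ∫ u in a..b, f' u * (W (q - u) - W (q - u - β (f u))) := by
    apply intervalIntegral.integral_congr
    intro u hu
    rw [Set.uIcc_of_le hab] at hu
    have hu0 : 0 < u := lt_of_lt_of_le ha0 hu.1
    have hsq : R₀/2*(f u)^2 = u := by
      rw [hf]
      simp only
      rw [Real.sq_sqrt (by positivity : (0:ℝ) ≤ (2/R₀)*u)]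
      field_simp
    simp only [smul_eq_mul, hg, hsq]
  rw [stepA, stepB, ← stepC, stepD]

lemma core (R₀ c₀ M₀ K γ : ℝ) (hR₀ : 0 < R₀) (hc₀ : 0 < c₀) (hM₀ : 0 < M₀) (hK : 0 < K)
    (hγ : 0 < γ) (hγ1 : γ ≤ 1)
    (W : ℝ → ℝ) (hWlip : ∀ x y : ℝ, |W x - W y| ≤ M₀ * |x - y|)
    (hWr : ∀ x, K ≤ x → W x = W K) (hWl : ∀ x, x ≤ -K → W x = W (-K))
    (β : ℝ → ℝ) (hβb : ∀ ν, |β ν| ≤ c₀)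
    (hβh : ∀ x y : ℝ, |β x - β y| ≤ c₀ * |x - y| ^ γ)
    (p Δ : ℝ) (hp : 4*(K + c₀) + 16 ≤ p) (hΔne : Δ ≠ 0) (hΔ : |Δ| ≤ Real.sqrt p) :
    |(∫ ν in Set.Ioi (0:ℝ), (W (p + Δ - R₀/2*ν^2) - W (p + Δ - R₀/2*ν^2 - β ν)))
      - ∫ ν in Set.Ioi (0:ℝ), (W (p - R₀/2*ν^2) - W (p - R₀/2*ν^2 - β ν))|
    ≤ (2*(K+c₀) * (((max 1 (Real.sqrt (1/R₀)))^2 + Real.sqrt (1/R₀)) * M₀ * c₀))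
       * |Δ| ^ γ * p ^ (-(1+γ)/2) := by
  set A := K + c₀ with hA
  have hA0 : 0 < A := by positivity
  set K₁ := Real.sqrt (1/R₀) with hK₁def
  have hK₁ : 0 < K₁ := Real.sqrt_pos.2 (by positivity)
  have hK₁sq : K₁ * K₁ = 1/R₀ := Real.mul_self_sqrt (by positivity)
  have hc0 : (0:ℝ) < 2/R₀ := by positivity
  have hp16 : (16:ℝ) ≤ p := by linarith
  have hA4 : 4*A ≤ p := by linarith
  have hp0 : (0:ℝ) < p := by linarith
  have hp1 : (1:ℝ) ≤ p := by linarith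
  have hSp : (0:ℝ) < Real.sqrt p := Real.sqrt_pos.2 hp0
  have hsp : Real.sqrt p ≤ p/4 := by
    have h1 : p ≤ (p/4)^2 := by nlinarith
    calc Real.sqrt p ≤ Real.sqrt ((p/4)^2) := Real.sqrt_le_sqrt h1
      _ = p/4 := Real.sqrt_sq (by linarith)
  have hAp : A ≤ p/4 := by linarith
  have hΔ4 : |Δ| ≤ p/4 := hΔ.trans hsp
  have hΔl : -(p/4) ≤ Δ := by
    have := abs_le.1 hΔ4; linarith [this.1]
  have hΔu : Δ ≤ p/4 := (abs_le.1 hΔ4).2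
  have hqΔ : A < p + Δ := by linarith
  have hqp : A < p := by linarith
  have hWcont : Continuous W :=
    continuous_of_holder one_pos (fun x y => by rw [Real.rpow_one]; exact hWlip x y)
  have hβcont : Continuous β := continuous_of_holder hγ hβh
  have h1 := half_eq R₀ c₀ K hR₀ hc₀ hK W hWcont hWr hWl β hβb hβcont (p+Δ) hqΔ
  have h2 := half_eq R₀ c₀ K hR₀ hc₀ hK W hWcont hWr hWl β hβb hβcont p hqp
  rw [h1, h2]
  set f : ℝ → ℝ := fun u => Real.sqrt ((2/R₀)*u) with hf
  set f' : ℝ → ℝ := fun u => (2/R₀)/(2*Real.sqrt ((2/R₀)*u)) with hf'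
  have hfcont : Continuous f := by
    apply Real.continuous_sqrt.comp; fun_prop
  set a := p - A with haa
  set b := p + A with hbb
  have hab : a ≤ b := by simp [haa, hbb]; linarith
  -- shift the first integral
  have hshift : (∫ u in (p+Δ-A)..(p+Δ+A),
      f' u * (W (p+Δ-u) - W (p+Δ-u - β (f u))))
      = ∫ u in a..b, f' (u+Δ) * (W (p-u) - W (p-u - β (f (u+Δ)))) := by
    rw [show p+Δ-A = a+Δ by rw [haa]; ring, show p+Δ+A = b+Δ by rw [hbb]; ring,
      ← intervalIntegral.integral_comp_add_right
        (fun u => f' u * (W (p+Δ-u) - W (p+Δ-u - β (f u)))) Δ]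
    apply intervalIntegral.integral_congr
    intro u _
    simp only [show ∀ v:ℝ, p+Δ-(v+Δ) = p-v from fun v => by ring]
  rw [hshift]
  -- continuity facts on the interval
  have hmem : ∀ u ∈ Set.Icc a b, p/2 ≤ u ∧ p/2 ≤ u + Δ := by
    intro u hu
    constructor
    · have := hu.1; simp [haa] at this ⊢; linarith
    · have := hu.1; simp [haa] at this ⊢; linarith
  have hf'contOn : ∀ d₀ : ℝ, (∀ u ∈ Set.Icc a b, 0 < u + d₀) →
      ContinuousOn (fun u => f' (u+d₀)) (Set.Icc a b) := by
    intro d₀ hpos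
    apply ContinuousOn.div continuousOn_const
    · fun_prop
    · intro u hu
      have h0 : 0 < (2/R₀)*(u+d₀) := by
        have := hpos u hu; positivity
      have : 0 < Real.sqrt ((2/R₀)*(u+d₀)) := Real.sqrt_pos.2 h0
      positivity
  have hint1 : IntervalIntegrable
      (fun u => f' (u+Δ) * (W (p-u) - W (p-u - β (f (u+Δ))))) volume a b := by
    apply ContinuousOn.intervalIntegrable
    rw [Set.uIcc_of_le hab]
    apply ContinuousOn.mul
    · exact hf'contOn Δ (fun u hu => by have := (hmem u hu).2; linarith)
    · apply ContinuousOn.sub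
      · exact (hWcont.comp (by fun_prop)).continuousOn
      · exact (hWcont.comp (by fun_prop)).continuousOn
  have hint2 : IntervalIntegrable
      (fun u => f' u * (W (p-u) - W (p-u - β (f u)))) volume a b := by
    apply ContinuousOn.intervalIntegrable
    rw [Set.uIcc_of_le hab]
    apply ContinuousOn.mul
    · have := hf'contOn 0 (fun u hu => by have := (hmem u hu).1; linarith)
      simpa using this
    · apply ContinuousOn.sub
      · exact (hWcont.comp (by fun_prop)).continuousOn
      · exact (hWcont.comp (by fun_prop)).continuousOn
  rw [← intervalIntegral.integral_sub hint1 hint2]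
  -- pointwise bound
  set Cpt := ((max 1 K₁)^2 + K₁) * (M₀*c₀) with hCpt
  have hmeq : Real.sqrt ((2/R₀)*(p/2)) = K₁ * Real.sqrt p := by
    rw [show (2/R₀)*(p/2) = (1/R₀)*p by ring, hK₁def, Real.sqrt_mul (by positivity) p]
  have hm0 : (0:ℝ) < (2/R₀)*(p/2) := by positivity
  have key : ∀ x ∈ Set.uIoc a b,
      ‖f' (x+Δ) * (W (p-x) - W (p-x - β (f (x+Δ))))
        - f' x * (W (p-x) - W (p-x - β (f x)))‖
      ≤ Cpt * |Δ|^γ * p^(-(1+γ)/2) := by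
    intro x hx
    rw [Set.uIoc_of_le hab] at hx
    obtain ⟨hx1, hx2⟩ := hx
    have hux : p/2 ≤ x := (hmem x ⟨hx1.le, hx2⟩).1
    have huxd : p/2 ≤ x + Δ := (hmem x ⟨hx1.le, hx2⟩).2
    have hx0 : 0 < x := by linarith
    have hxd0 : 0 < x + Δ := by linarith
    -- B1 : bound on f'
    have hf'le : ∀ t, p/2 ≤ t → f' t ≤ K₁ / Real.sqrt p := by
      intro t ht
      have hle : K₁ * Real.sqrt p ≤ Real.sqrt ((2/R₀)*t) := by
        rw [← hmeq]
        exact Real.sqrt_le_sqrt (mul_le_mul_of_nonneg_left ht hc0.le)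
      have h3 : (2/R₀)/(2*(K₁*Real.sqrt p)) = K₁/Real.sqrt p := by
        rw [show (2:ℝ)/R₀ = 2*(K₁*K₁) by rw [hK₁sq]; ring]
        field_simp
      calc f' t ≤ (2/R₀)/(2*(K₁*Real.sqrt p)) := by
            show (2/R₀)/(2*Real.sqrt ((2/R₀)*t)) ≤ (2/R₀)/(2*(K₁*Real.sqrt p))
            gcongr
        _ = K₁/Real.sqrt p := h3
    have hf'0 : ∀ t, 0 ≤ f' t := by
      intro t
      show (0:ℝ) ≤ (2/R₀)/(2*Real.sqrt ((2/R₀)*t))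
      positivity
    -- B2 : increment of f
    have hfd : |f (x+Δ) - f x| ≤ K₁*|Δ|/Real.sqrt p := by
      have h := sqrt_diff_le hm0
        (mul_le_mul_of_nonneg_left huxd hc0.le)
        (mul_le_mul_of_nonneg_left hux hc0.le)
      rw [show (2/R₀)*(x+Δ) - (2/R₀)*x = (2/R₀)*Δ by ring, abs_mul,
        abs_of_pos hc0, hmeq] at h
      calc |f (x+Δ) - f x| ≤ (2/R₀)*|Δ| / (2*(K₁*Real.sqrt p)) := h
        _ = K₁*|Δ|/Real.sqrt p := by
            rw [show (2:ℝ)/R₀ = 2*(K₁*K₁) by rw [hK₁sq]; ring]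
            field_simp
    -- B3 : increment of f'
    have hf'd : |f' (x+Δ) - f' x| ≤ K₁*|Δ|/(p*Real.sqrt p) := by
      have hform : ∀ t, f' t = (1/R₀) * (1 / Real.sqrt ((2/R₀)*t)) := by
        intro t
        show (2/R₀)/(2*Real.sqrt ((2/R₀)*t)) = (1/R₀) * (1 / Real.sqrt ((2/R₀)*t))
        ring
      have h := inv_sqrt_diff_le hm0
        (mul_le_mul_of_nonneg_left huxd hc0.le)
        (mul_le_mul_of_nonneg_left hux hc0.le)
      rw [show (2/R₀)*(x+Δ) - (2/R₀)*x = (2/R₀)*Δ by ring, abs_mul,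
        abs_of_pos hc0, hmeq] at h
      have h2 : |f' (x+Δ) - f' x|
          = (1/R₀) * |1 / Real.sqrt ((2/R₀)*(x+Δ)) - 1 / Real.sqrt ((2/R₀)*x)| := by
        rw [hform, hform, ← mul_sub, abs_mul, abs_of_pos (by positivity : (0:ℝ) < 1/R₀)]
      rw [h2]
      calc (1/R₀) * |1 / Real.sqrt ((2/R₀)*(x+Δ)) - 1 / Real.sqrt ((2/R₀)*x)|
          ≤ (1/R₀) * ((2/R₀)*|Δ| / (2*((2/R₀)*(p/2))*(K₁*Real.sqrt p))) := by
            apply mul_le_mul_of_nonneg_left h (by positivity)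
        _ = K₁*|Δ|/(p*Real.sqrt p) := by
            rw [show (1:ℝ)/R₀ = K₁*K₁ from hK₁sq.symm]
            field_simp
    -- B4 : W increments
    have hY : |W (p-x - β (f x)) - W (p-x - β (f (x+Δ)))|
        ≤ (M₀*c₀) * (K₁*|Δ|/Real.sqrt p)^γ := by
      calc |W (p-x - β (f x)) - W (p-x - β (f (x+Δ)))|
          ≤ M₀ * |(p-x - β (f x)) - (p-x - β (f (x+Δ)))| := hWlip _ _
        _ = M₀ * |β (f (x+Δ)) - β (f x)| := by
            rw [show (p-x - β (f x)) - (p-x - β (f (x+Δ))) = β (f (x+Δ)) - β (f x) by ring]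
        _ ≤ M₀ * (c₀ * |f (x+Δ) - f x|^γ) := by
            apply mul_le_mul_of_nonneg_left (hβh _ _) hM₀.le
        _ ≤ M₀ * (c₀ * (K₁*|Δ|/Real.sqrt p)^γ) := by
            apply mul_le_mul_of_nonneg_left _ hM₀.le
            apply mul_le_mul_of_nonneg_left _ hc₀.le
            exact Real.rpow_le_rpow (abs_nonneg _) hfd hγ.le
        _ = (M₀*c₀) * (K₁*|Δ|/Real.sqrt p)^γ := by ring
    have hX : |W (p-x) - W (p-x - β (f x))| ≤ M₀*c₀ := by
      calc |W (p-x) - W (p-x - β (f x))|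
          ≤ M₀ * |(p-x) - (p-x - β (f x))| := hWlip _ _
        _ = M₀ * |β (f x)| := by rw [show (p-x) - (p-x - β (f x)) = β (f x) by ring]
        _ ≤ M₀ * c₀ := mul_le_mul_of_nonneg_left (hβb _) hM₀.le
    -- combine
    have hdec : f' (x+Δ) * (W (p-x) - W (p-x - β (f (x+Δ))))
        - f' x * (W (p-x) - W (p-x - β (f x)))
        = f' (x+Δ) * (W (p-x - β (f x)) - W (p-x - β (f (x+Δ))))
          + (f' (x+Δ) - f' x) * (W (p-x) - W (p-x - β (f x))) := by ring
    rw [Real.norm_eq_abs, hdec]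
    have hterm1 : |f' (x+Δ) * (W (p-x - β (f x)) - W (p-x - β (f (x+Δ))))|
        ≤ (K₁/Real.sqrt p) * ((M₀*c₀) * (K₁*|Δ|/Real.sqrt p)^γ) := by
      rw [abs_mul]
      apply mul_le_mul
      · rw [abs_of_nonneg (hf'0 _)]; exact hf'le _ huxd
      · exact hY
      · exact abs_nonneg _
      · positivity
    have hterm2 : |(f' (x+Δ) - f' x) * (W (p-x) - W (p-x - β (f x)))|
        ≤ (K₁*|Δ|/(p*Real.sqrt p)) * (M₀*c₀) := by
      rw [abs_mul]
      apply mul_le_mul hf'd hX (abs_nonneg _) (by positivity)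
    have hT1 := T1bound K₁ (M₀*c₀) γ p (|Δ|) hK₁ (by positivity) hp0 (abs_nonneg _) hγ hγ1
    have hT2 := T2bound K₁ (M₀*c₀) γ p (|Δ|) hK₁.le (by positivity) hp1
      (abs_pos.2 hΔne) hΔ hγ hγ1
    calc |f' (x+Δ) * (W (p-x - β (f x)) - W (p-x - β (f (x+Δ))))
          + (f' (x+Δ) - f' x) * (W (p-x) - W (p-x - β (f x)))|
        ≤ _ + _ := abs_add_le _ _
      _ ≤ (K₁/Real.sqrt p) * ((M₀*c₀) * (K₁*|Δ|/Real.sqrt p)^γ)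
            + (K₁*|Δ|/(p*Real.sqrt p)) * (M₀*c₀) := add_le_add hterm1 hterm2
      _ ≤ (max 1 K₁)^2 * (M₀*c₀) * |Δ|^γ * p^(-(1+γ)/2)
            + K₁ * (M₀*c₀) * |Δ|^γ * p^(-(1+γ)/2) := add_le_add hT1 hT2
      _ = Cpt * |Δ|^γ * p^(-(1+γ)/2) := by rw [hCpt]; ring
  have hnorm := intervalIntegral.norm_integral_le_of_norm_le_const key
  rw [Real.norm_eq_abs] at hnorm
  have hba : |b - a| = 2*A := by
    rw [show b - a = 2*A by rw [haa, hbb]; ring, abs_of_pos (by positivity)]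
  rw [hba] at hnorm
  calc |∫ u in a..b, (f' (u+Δ) * (W (p-u) - W (p-u - β (f (u+Δ))))
          - f' u * (W (p-u) - W (p-u - β (f u))))|
      ≤ Cpt * |Δ|^γ * p^(-(1+γ)/2) * (2*A) := hnorm
    _ = (2*A * (((max 1 K₁)^2 + K₁) * M₀ * c₀)) * |Δ|^γ * p^(-(1+γ)/2) := by
        rw [hCpt]; ring



lemma split_int (R₀ c₀ K : ℝ) (hR₀ : 0 < R₀) (hc₀ : 0 < c₀) (hK : 0 < K)
    (W : ℝ → ℝ) (hWcont : Continuous W)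
    (hWl : ∀ x, x ≤ -K → W x = W (-K))
    (β : ℝ → ℝ) (hβb : ∀ ν, |β ν| ≤ c₀) (hβcont : Continuous β)
    (q : ℝ) :
    ∫ ν : ℝ, (W (q - R₀/2*ν^2) - W (q - R₀/2*ν^2 - β ν))
      = (∫ ν in Set.Ioi (0:ℝ), (W (q - R₀/2*ν^2) - W (q - R₀/2*ν^2 - β (-ν))))
        + ∫ ν in Set.Ioi (0:ℝ), (W (q - R₀/2*ν^2) - W (q - R₀/2*ν^2 - β ν)) := by
  set F : ℝ → ℝ := fun ν => W (q - R₀/2*ν^2) - W (q - R₀/2*ν^2 - β ν) with hF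
  have hFcont : Continuous F := by
    apply Continuous.sub
    · exact hWcont.comp (by fun_prop)
    · exact hWcont.comp (by fun_prop)
  have hFzero : ∀ ν : ℝ, 2*(q+K+c₀)/R₀ ≤ ν^2 → F ν = 0 := by
    intro ν hν
    have hβν := abs_le.1 (hβb ν)
    have hq1 : q + K + c₀ ≤ R₀/2*ν^2 := by
      rw [div_le_iff₀ (by positivity)] at hν
      nlinarith
    have h1 : q - R₀/2*ν^2 ≤ -K := by linarith
    have h2 : q - R₀/2*ν^2 - β ν ≤ -K := by linarith [hβν.2]
    simp [hF, hWl _ h1, hWl _ h2]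
  set M : ℝ := max 0 (2*(q+K+c₀)/R₀) with hM
  set ρ : ℝ := Real.sqrt M + 1 with hρ
  have hρ0 : 0 < ρ := by positivity
  have hFcs : HasCompactSupport F := by
    apply HasCompactSupport.intro (isCompact_Icc (a := -ρ) (b := ρ))
    intro x hx
    simp only [Set.mem_Icc, not_and, not_le] at hx
    apply hFzero
    have hsq : Real.sqrt M ^ 2 = M := Real.sq_sqrt (le_max_left _ _)
    have hMle : 2*(q+K+c₀)/R₀ ≤ M := le_max_right _ _
    have hρsq : M ≤ ρ^2 := by
      rw [hρ]
      nlinarith [Real.sqrt_nonneg M]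
    have hxsq : ρ^2 ≤ x^2 := by
      rcases le_or_gt x (-ρ) with h | h
      · nlinarith
      · have := hx h.le; nlinarith
    linarith
  have hFint : Integrable F := hFcont.integrable_of_hasCompactSupport hFcs
  rw [← intervalIntegral.integral_Iic_add_Ioi (b := (0:ℝ)) hFint.integrableOn hFint.integrableOn]
  congr 1
  have hneg : ∫ ν in Set.Ioi (0:ℝ), F (-ν) = ∫ ν in Set.Iic (0:ℝ), F ν := by
    have := integral_comp_neg_Ioi (0:ℝ) F
    simpa using this
  rw [← hneg]
  apply setIntegral_congr_fun measurableSet_Ioi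
  intro ν _
  simp only [hF, neg_sq]


end Stmt3Aux

open Stmt3Aux

/-- Hölder-type increment bound for the leading data term
`g_l(α,p̂) = D R₀ ∫_ℝ ∫₀^{H₀(α̃+ν)} w(p̂ − (R₀/2)ν² − t) dt dν`:
for any fixed `δ ∈ (0,1/2)` there exist `C > 0`, `P₀ ≥ 1`, uniform in
`α ∈ (−a,a)` and sufficiently small `ε > 0`, such that
`|g_l(α, p̂+Δp̂) − g_l(α, p̂)| ≤ C |Δp̂|^γ p̂^{−(1+γ)/2}` whenever `p̂ ≥ P₀` and
`|Δp̂| ≤ p̂^δ`. -/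
theorem stmt_3 (γ a c₀ ε₀ D R₀ δ : ℝ) (w : ℝ → ℝ) (H : ℝ → ℝ → ℝ)
    (hγ : γ ∈ Set.Ioc (0:ℝ) 1) (ha : 0 < a) (hc₀ : 0 < c₀) (hε₀ : 0 < ε₀)
    (hR₀ : 0 < R₀) (hδ : δ ∈ Set.Ioo (0:ℝ) (1/2))
    -- the detector aperture function w ∈ C₀²(ℝ), even, with ∫ w = 1
    (hw_even : ∀ p : ℝ, w (-p) = w p)
    (hw_supp : HasCompactSupport w)
    (hw_d1 : ∀ p : ℝ, DifferentiableAt ℝ w p)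
    (hw_d2 : ∀ p : ℝ, DifferentiableAt ℝ (deriv w) p)
    (hw_bdd : ∃ M : ℝ, ∀ᵐ p : ℝ, |deriv (deriv w) p| ≤ M)
    (hw_int : ∫ p : ℝ, w p = 1)
    -- the perturbation family: H1 and H2
    (hH1 : ∀ ε ∈ Set.Ioo (0:ℝ) ε₀, ∀ s : ℝ, |H ε s| ≤ c₀ * ε)
    (hH2 : ∀ ε ∈ Set.Ioo (0:ℝ) ε₀, ∀ s h : ℝ, 0 < h →
      |H ε (s + Real.sqrt ε * h) - H ε s| ≤ c₀ * ε * h ^ γ)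
    -- the leading term g_l
    (gl : ℝ → ℝ → ℝ → ℝ)
    (hgl : ∀ ε α p : ℝ, gl ε α p = D * R₀ *
      ∫ ν : ℝ, ∫ t in (0:ℝ)..(ε⁻¹ * H ε (α + Real.sqrt ε * ν)),
        w (p - R₀ / 2 * ν ^ 2 - t)) :
    ∃ C P₀ : ℝ, 0 < C ∧ 1 ≤ P₀ ∧ ∃ ε₁ : ℝ, 0 < ε₁ ∧ ε₁ ≤ ε₀ ∧
      ∀ ε ∈ Set.Ioo (0:ℝ) ε₁, ∀ α ∈ Set.Ioo (-a) a,
        ∀ p : ℝ, P₀ ≤ p → ∀ Δp : ℝ, |Δp| ≤ p ^ δ →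
          |gl ε α (p + Δp) - gl ε α p| ≤ C * |Δp| ^ γ * p ^ (-(1 + γ) / 2) := by
  obtain ⟨hγ0, hγ1⟩ := hγ
  -- continuity and boundedness of w
  have hw_cont : Continuous w := continuous_iff_continuousAt.2 fun x => (hw_d1 x).continuousAt
  obtain ⟨M₀', hM₀'⟩ := hw_supp.exists_bound_of_continuous hw_cont
  set M₀ : ℝ := max M₀' 1 with hM₀def
  have hM₀ : 0 < M₀ := lt_of_lt_of_le one_pos (le_max_right _ _)
  have hwbd : ∀ x, |w x| ≤ M₀ := fun x => le_trans
    (by rw [← Real.norm_eq_abs]; exact hM₀' x) (le_max_left _ _)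
  -- support radius
  obtain ⟨Kb, hKb⟩ := hw_supp.isBounded.subset_closedBall (0:ℝ)
  set K : ℝ := max Kb 0 + 1 with hKdef
  have hK : 0 < K := by positivity
  have hwK : ∀ x : ℝ, K ≤ |x| → w x = 0 := by
    intro x hx
    apply image_eq_zero_of_notMem_tsupport
    intro hmem
    have := hKb hmem
    rw [Metric.mem_closedBall, Real.dist_eq, sub_zero] at this
    have : |x| ≤ max Kb 0 := le_trans this (le_max_left _ _)
    linarith
  -- the primitive W
  set W : ℝ → ℝ := fun x => ∫ t in (0:ℝ)..x, w t with hWdef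
  have hwint : ∀ a b : ℝ, IntervalIntegrable w volume a b :=
    fun a b => hw_cont.intervalIntegrable a b
  have hWsub : ∀ x y : ℝ, W x - W y = ∫ t in y..x, w t := fun x y =>
    intervalIntegral.integral_interval_sub_left (hwint 0 x) (hwint 0 y)
  have hWlip : ∀ x y : ℝ, |W x - W y| ≤ M₀ * |x - y| := by
    intro x y
    rw [hWsub, ← Real.norm_eq_abs]
    exact intervalIntegral.norm_integral_le_of_norm_le_const
      (fun t _ => by rw [Real.norm_eq_abs]; exact hwbd t)
  have hWr : ∀ x, K ≤ x → W x = W K := by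
    intro x hx
    have h0 : ∫ t in K..x, w t = 0 := by
      rw [intervalIntegral.integral_congr (g := fun _ => (0:ℝ))
        (fun t ht => ?_)]
      · simp
      · rw [Set.uIcc_of_le hx] at ht
        exact hwK t (le_trans ht.1 (le_abs_self t))
    have := hWsub x K
    rw [h0] at this
    linarith [this]
  have hWl : ∀ x, x ≤ -K → W x = W (-K) := by
    intro x hx
    have h0 : ∫ t in (-K)..x, w t = 0 := by
      rw [intervalIntegral.integral_congr (g := fun _ => (0:ℝ))
        (fun t ht => ?_)]
      · simp
      · rw [Set.uIcc_of_ge hx] at ht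
        apply hwK t
        rw [abs_of_nonpos (by linarith [ht.2] : t ≤ 0)]
        linarith [ht.2]
    have := hWsub x (-K)
    rw [h0] at this
    linarith [this]
  have hWcont : Continuous W :=
    continuous_of_holder one_pos (fun x y => by rw [Real.rpow_one]; exact hWlip x y)
  -- inner integral identity
  have inner : ∀ x y : ℝ, (∫ t in (0:ℝ)..y, w (x - t)) = W x - W (x - y) := by
    intro x y
    rw [intervalIntegral.integral_comp_sub_left (fun t => w t) x, sub_zero]
    exact (hWsub x (x - y)).symm
  -- constants
  set K₁ : ℝ := Real.sqrt (1/R₀) with hK₁def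
  set Cc : ℝ := 2*(K+c₀) * (((max 1 K₁)^2 + K₁) * M₀ * c₀) with hCcdef
  have hCc : 0 < Cc := by
    have h1 : (0:ℝ) < (max 1 K₁)^2 := by positivity
    have h2 : (0:ℝ) ≤ K₁ := Real.sqrt_nonneg _
    have : (0:ℝ) < (max 1 K₁)^2 + K₁ := by linarith
    positivity
  have hCnn : (0:ℝ) ≤ 2 * |D * R₀| * Cc :=
    mul_nonneg (mul_nonneg (by norm_num) (abs_nonneg _)) hCc.le
  refine ⟨2 * |D * R₀| * Cc + 1, 4*(K+c₀) + 16, by linarith, by linarith, ε₀, hε₀, le_refl _, ?_⟩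
  intro ε hε α hα p hp Δp hΔp
  have hε0 : 0 < ε := hε.1
  have hεne : ε ≠ 0 := ne_of_gt hε0
  -- the perturbation function
  set β : ℝ → ℝ := fun ν => ε⁻¹ * H ε (α + Real.sqrt ε * ν) with hβdef
  have hβb : ∀ ν, |β ν| ≤ c₀ := by
    intro ν
    rw [hβdef]
    simp only
    rw [abs_mul, abs_of_pos (inv_pos.2 hε0)]
    calc ε⁻¹ * |H ε (α + Real.sqrt ε * ν)| ≤ ε⁻¹ * (c₀ * ε) := by
          apply mul_le_mul_of_nonneg_left (hH1 ε hε _) (inv_pos.2 hε0).le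
      _ = c₀ := by field_simp
  have hβhalf : ∀ x y : ℝ, x < y → |β x - β y| ≤ c₀ * |x - y| ^ γ := by
    intro x y hxy
    have hpos : 0 < y - x := by linarith
    have h := hH2 ε hε (α + Real.sqrt ε * x) (y - x) hpos
    rw [show α + Real.sqrt ε * x + Real.sqrt ε * (y - x) = α + Real.sqrt ε * y by ring] at h
    have : |β x - β y| = ε⁻¹ * |H ε (α + Real.sqrt ε * y) - H ε (α + Real.sqrt ε * x)| := by
      rw [hβdef]
      simp only
      rw [← mul_sub, abs_mul, abs_of_pos (inv_pos.2 hε0), abs_sub_comm]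
    rw [this, show |x - y| = y - x by rw [abs_sub_comm, abs_of_pos hpos]]
    calc ε⁻¹ * |H ε (α + Real.sqrt ε * y) - H ε (α + Real.sqrt ε * x)|
        ≤ ε⁻¹ * (c₀ * ε * (y-x)^γ) := mul_le_mul_of_nonneg_left h (inv_pos.2 hε0).le
      _ = c₀ * (y-x)^γ := by field_simp
  have hβh : ∀ x y : ℝ, |β x - β y| ≤ c₀ * |x - y| ^ γ := by
    intro x y
    rcases lt_trichotomy x y with h | h | h
    · exact hβhalf x y h
    · rw [h]
      simp [Real.zero_rpow (ne_of_gt hγ0)]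
    · rw [abs_sub_comm, abs_sub_comm x y]
      exact hβhalf y x h
  have hβcont : Continuous β := continuous_of_holder hγ0 hβh
  -- the reflected β
  set βm : ℝ → ℝ := fun ν => β (-ν) with hβmdef
  have hβmb : ∀ ν, |βm ν| ≤ c₀ := fun ν => hβb (-ν)
  have hβmh : ∀ x y : ℝ, |βm x - βm y| ≤ c₀ * |x - y| ^ γ := by
    intro x y
    calc |βm x - βm y| = |β (-x) - β (-y)| := rfl
      _ ≤ c₀ * |(-x) - (-y)| ^ γ := hβh _ _
      _ = c₀ * |x - y| ^ γ := by rw [show -x - -y = -(x-y) by ring, abs_neg]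
  -- basic size facts
  have hA0 : (0:ℝ) < K + c₀ := by positivity
  have hp0 : (0:ℝ) < p := by linarith
  have hp1 : (1:ℝ) ≤ p := by linarith
  have hΔs : |Δp| ≤ Real.sqrt p := by
    calc |Δp| ≤ p ^ δ := hΔp
      _ ≤ p ^ (1/2:ℝ) := Real.rpow_le_rpow_of_exponent_le hp1 (le_of_lt hδ.2)
      _ = Real.sqrt p := (Real.sqrt_eq_rpow p).symm
  -- rewrite gl
  have hglq : ∀ q : ℝ, gl ε α q
      = D * R₀ * ((∫ ν in Set.Ioi (0:ℝ), (W (q - R₀/2*ν^2) - W (q - R₀/2*ν^2 - β (-ν))))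
        + ∫ ν in Set.Ioi (0:ℝ), (W (q - R₀/2*ν^2) - W (q - R₀/2*ν^2 - β ν))) := by
    intro q
    rw [hgl ε α q]
    congr 1
    have hβrfl : ∀ ν:ℝ, ε⁻¹ * H ε (α + Real.sqrt ε * ν) = β ν := fun ν => rfl
    simp only [inner, hβrfl]
    rw [split_int R₀ c₀ K hR₀ hc₀ hK W hWcont hWl β hβb hβcont q]
  -- main estimate
  by_cases hΔ0 : Δp = 0
  · rw [hΔ0]
    simp [Real.zero_rpow (ne_of_gt hγ0)]
  · have hcore1 : |(∫ ν in Set.Ioi (0:ℝ), (W (p + Δp - R₀/2*ν^2) - W (p + Δp - R₀/2*ν^2 - β ν)))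
        - ∫ ν in Set.Ioi (0:ℝ), (W (p - R₀/2*ν^2) - W (p - R₀/2*ν^2 - β ν))|
        ≤ Cc * |Δp| ^ γ * p ^ (-(1+γ)/2) :=
      core R₀ c₀ M₀ K γ hR₀ hc₀ hM₀ hK hγ0 hγ1 W hWlip hWr hWl β hβb hβh p Δp hp hΔ0 hΔs
    have hcore2 : |(∫ ν in Set.Ioi (0:ℝ), (W (p + Δp - R₀/2*ν^2) - W (p + Δp - R₀/2*ν^2 - β (-ν))))
        - ∫ ν in Set.Ioi (0:ℝ), (W (p - R₀/2*ν^2) - W (p - R₀/2*ν^2 - β (-ν)))|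
        ≤ Cc * |Δp| ^ γ * p ^ (-(1+γ)/2) :=
      core R₀ c₀ M₀ K γ hR₀ hc₀ hM₀ hK hγ0 hγ1 W hWlip hWr hWl βm hβmb hβmh p Δp hp hΔ0 hΔs
    rw [hglq (p+Δp), hglq p]
    set N₁ := ∫ ν in Set.Ioi (0:ℝ), (W (p + Δp - R₀/2*ν^2) - W (p + Δp - R₀/2*ν^2 - β (-ν))) with hN₁
    set P₁ := ∫ ν in Set.Ioi (0:ℝ), (W (p + Δp - R₀/2*ν^2) - W (p + Δp - R₀/2*ν^2 - β ν)) with hP₁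
    set N₂ := ∫ ν in Set.Ioi (0:ℝ), (W (p - R₀/2*ν^2) - W (p - R₀/2*ν^2 - β (-ν))) with hN₂
    set P₂ := ∫ ν in Set.Ioi (0:ℝ), (W (p - R₀/2*ν^2) - W (p - R₀/2*ν^2 - β ν)) with hP₂
    have hsplit : D * R₀ * (N₁ + P₁) - D * R₀ * (N₂ + P₂)
        = D * R₀ * ((N₁ - N₂) + (P₁ - P₂)) := by ring
    rw [hsplit, abs_mul]
    calc |D * R₀| * |(N₁ - N₂) + (P₁ - P₂)|
        ≤ |D * R₀| * (|N₁ - N₂| + |P₁ - P₂|) :=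
          mul_le_mul_of_nonneg_left (abs_add_le _ _) (abs_nonneg _)
      _ ≤ |D * R₀| * (Cc * |Δp| ^ γ * p ^ (-(1+γ)/2) + Cc * |Δp| ^ γ * p ^ (-(1+γ)/2)) :=
          mul_le_mul_of_nonneg_left (add_le_add hcore2 hcore1) (abs_nonneg _)
      _ = (2 * |D * R₀| * Cc) * (|Δp| ^ γ * p ^ (-(1+γ)/2)) := by ring
      _ ≤ (2 * |D * R₀| * Cc + 1) * (|Δp| ^ γ * p ^ (-(1+γ)/2)) := by
          apply mul_le_mul_of_nonneg_right (by linarith) (by positivity)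
      _ = (2 * |D * R₀| * Cc + 1) * |Δp| ^ γ * p ^ (-(1 + γ) / 2) := by ring
end

section
/- Let γ ∈ (0,1), let φ(s) := ⌊s⌋ + {s}^γ (⌊s⌋ the floor, {s} = s − ⌊s⌋ the fractional part), and define H₀(s) := Σ_{n=0}^∞ φ(2ⁿ s)/3ⁿ. Then the series converges absolutely for every s ≥ 0, H₀ is strictly monotonically increasing on [0, ∞), and there exists a constant c > 0 such that |H₀(s + h) − H₀(s)| ≤ c · max(h^γ, h) for all s ≥ 0 and h > 0; in particular, H₀ is locally Hölder continuous with exponent γ. -/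
/-- The Hölder staircase building block `φ(s) = ⌊s⌋ + {s}^γ`. -/
noncomputable def phiStair (γ s : ℝ) : ℝ := (⌊s⌋ : ℝ) + Int.fract s ^ γ

/-- The Schwarz-type function `H₀(s) = Σ_{n≥0} φ(2ⁿ s)/3ⁿ`. -/
noncomputable def schwarzH (γ s : ℝ) : ℝ := ∑' n : ℕ, phiStair γ (2 ^ n * s) / 3 ^ n

set_option maxHeartbeats 1000000

section aux
variable {γ : ℝ} (hγ0 : 0 < γ) (hγ1 : γ < 1)

lemma my_subadd (a b : ℝ) (ha : 0 ≤ a) (hb : 0 ≤ b) (h0 : 0 ≤ γ) (h1 : γ ≤ 1) :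
    (a + b) ^ γ ≤ a ^ γ + b ^ γ := by
  have h := NNReal.rpow_add_le_add_rpow a.toNNReal b.toNNReal h0 h1
  have := NNReal.coe_le_coe.2 h
  push_cast at this
  rwa [Real.coe_toNNReal _ ha, Real.coe_toNNReal _ hb] at this

include hγ0 in
lemma phi_le (t : ℝ) : phiStair γ t ≤ t + 1 := by
  have h1 : Int.fract t ^ γ ≤ 1 :=
    Real.rpow_le_one (Int.fract_nonneg t) (Int.fract_lt_one t).le hγ0.le
  have := Int.floor_le t
  unfold phiStair; linarith

lemma phi_ge (t : ℝ) : t - 1 ≤ phiStair γ t := by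
  have h1 : 0 ≤ Int.fract t ^ γ := Real.rpow_nonneg (Int.fract_nonneg t) _
  have := Int.sub_one_lt_floor t
  unfold phiStair; linarith

include hγ0 in
lemma phi_mono : StrictMono (phiStair γ) := by
  intro s t hst
  unfold phiStair
  rcases lt_or_ge ⌊s⌋ ⌊t⌋ with h | h
  · have h1 : Int.fract s ^ γ < 1 :=
      Real.rpow_lt_one (Int.fract_nonneg s) (Int.fract_lt_one s) hγ0
    have h2 : 0 ≤ Int.fract t ^ γ := Real.rpow_nonneg (Int.fract_nonneg t) _
    have h3 : (⌊s⌋ : ℝ) + 1 ≤ (⌊t⌋ : ℝ) := by exact_mod_cast h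
    linarith
  · have hfl : ⌊s⌋ = ⌊t⌋ := le_antisymm (Int.floor_le_floor hst.le) h
    have hf : Int.fract s < Int.fract t := by
      unfold Int.fract; rw [hfl]; linarith
    have := Real.rpow_lt_rpow (Int.fract_nonneg s) hf hγ0
    rw [hfl]; linarith

include hγ0 hγ1 in
lemma phi_holder (x d : ℝ) (hd : 0 < d) :
    phiStair γ (x + d) - phiStair γ x ≤ 3 * max (d ^ γ) d := by
  have hM : d ≤ max (d ^ γ) d := le_max_right _ _
  have hMγ : d ^ γ ≤ max (d ^ γ) d := le_max_left _ _
  rcases le_or_gt 1 d with h1 | h1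
  · have := phi_le hγ0 (x + d)
    have := phi_ge (γ := γ) x
    have : phiStair γ (x + d) - phiStair γ x ≤ d + 2 := by linarith
    linarith
  · -- d < 1
    have hfloor : ⌊x⌋ ≤ ⌊x + d⌋ := Int.floor_le_floor (by linarith)
    have hfloor2 : ⌊x + d⌋ ≤ ⌊x⌋ + 1 := by
      have : ⌊x + d⌋ ≤ ⌊x + 1⌋ := Int.floor_le_floor (by linarith)
      simpa using this
    set a := Int.fract x with ha
    have ha0 : 0 ≤ a := Int.fract_nonneg x
    have ha1 : a < 1 := Int.fract_lt_one x
    rcases le_or_gt ⌊x + d⌋ ⌊x⌋ with h | h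
    · have hfl : ⌊x + d⌋ = ⌊x⌋ := le_antisymm h hfloor
      have hfr : Int.fract (x + d) = a + d := by
        unfold Int.fract; rw [hfl, ha]; unfold Int.fract; ring
      have hsub : (a + d) ^ γ ≤ a ^ γ + d ^ γ :=
        my_subadd a d ha0 hd.le hγ0.le hγ1.le
      unfold phiStair
      rw [hfl, hfr]
      linarith
    · have hfl : ⌊x + d⌋ = ⌊x⌋ + 1 := le_antisymm hfloor2 h
      have hfr : Int.fract (x + d) = a + d - 1 := by
        unfold Int.fract; rw [hfl, ha]; push_cast; unfold Int.fract; ring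
      have hb0 : 0 ≤ a + d - 1 := by
        have := Int.fract_nonneg (x + d); rw [hfr] at this; linarith
      have hb1 : a + d - 1 ≤ d := by linarith
      have h1a : 1 - a ≤ d := by linarith
      have hsub : ((1 - a) + a) ^ γ ≤ (1 - a) ^ γ + a ^ γ :=
        my_subadd (1 - a) a (by linarith) ha0 hγ0.le hγ1.le
      have hone : ((1 - a) + a : ℝ) ^ γ = 1 := by
        norm_num
      have h2 : (1 - a) ^ γ ≤ d ^ γ :=
        Real.rpow_le_rpow (by linarith) h1a hγ0.le
      have h3 : (a + d - 1) ^ γ ≤ d ^ γ :=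
        Real.rpow_le_rpow hb0 hb1 hγ0.le
      unfold phiStair
      rw [hfl, hfr]
      push_cast
      have : 1 - a ^ γ ≤ d ^ γ := by rw [hone] at hsub; linarith
      linarith
end aux

/-- the series defining `H₀` converges absolutely for every `s ≥ 0`,
`H₀` is strictly increasing on `[0,∞)`, and `|H₀(s+h) − H₀(s)| ≤ c·max(h^γ, h)`
for all `s ≥ 0`, `h > 0`; in particular `H₀` is locally γ-Hölder. -/
theorem stmt_16 (γ : ℝ) (hγ : γ ∈ Set.Ioo (0:ℝ) 1) :
    (∀ s : ℝ, 0 ≤ s → Summable fun n : ℕ => |phiStair γ (2 ^ n * s) / 3 ^ n|) ∧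
    StrictMonoOn (schwarzH γ) (Set.Ici 0) ∧
    ∃ c : ℝ, 0 < c ∧ ∀ s h : ℝ, 0 ≤ s → 0 < h →
      |schwarzH γ (s + h) - schwarzH γ s| ≤ c * max (h ^ γ) h := by
  obtain ⟨hγ0, hγ1⟩ := hγ
  have hgeo : Summable fun n : ℕ => ((2:ℝ)/3) ^ n :=
    summable_geometric_of_lt_one (by norm_num) (by norm_num)
  -- absolute summability
  have habs : ∀ s : ℝ, 0 ≤ s → Summable fun n : ℕ => |phiStair γ (2 ^ n * s) / 3 ^ n| := by
    intro s hs
    refine Summable.of_nonneg_of_le (f := fun n => (s + 1) * ((2:ℝ)/3) ^ n)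
      (fun n => abs_nonneg _) ?_ (hgeo.mul_left _)
    intro n
    have h2n : (1:ℝ) ≤ 2 ^ n := one_le_pow₀ (by norm_num)
    have h3n : (0:ℝ) < 3 ^ n := by positivity
    have hnn : 0 ≤ phiStair γ (2 ^ n * s) := by
      have h1 : (0:ℝ) - 1 ≤ phiStair γ (2 ^ n * s) := by
        calc (0:ℝ) - 1 ≤ 2 ^ n * s - 1 := by nlinarith
        _ ≤ _ := phi_ge _
      have h2 : phiStair γ 0 ≤ phiStair γ (2 ^ n * s) ∨ (2:ℝ) ^ n * s = 0 := by
        rcases eq_or_lt_of_le (by positivity : (0:ℝ) ≤ 2 ^ n * s) with h | h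
        · right; exact h.symm
        · left; exact ((phi_mono hγ0).lt_iff_lt.2 h).le
      rcases h2 with h2 | h2
      · have : phiStair γ 0 = 0 := by
          simp [phiStair, Real.zero_rpow hγ0.ne']
        linarith
      · rw [h2]; simp [phiStair, Real.zero_rpow hγ0.ne']
    rw [abs_of_nonneg (by positivity)]
    have hb : phiStair γ (2 ^ n * s) ≤ 2 ^ n * (s + 1) := by
      have := phi_le hγ0 (2 ^ n * s)
      nlinarith
    calc phiStair γ (2 ^ n * s) / 3 ^ n ≤ 2 ^ n * (s + 1) / 3 ^ n := by
          apply div_le_div_of_nonneg_right hb h3n.le |>.trans_eq rfl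
      _ = (s + 1) * ((2:ℝ)/3) ^ n := by
          rw [div_pow]; ring
  have hsum : ∀ s : ℝ, 0 ≤ s → Summable fun n : ℕ => phiStair γ (2 ^ n * s) / 3 ^ n :=
    fun s hs => (habs s hs).of_abs
  refine ⟨habs, ?_, ?_⟩
  · -- strict mono
    intro s hs t ht hst
    have h1 := hsum s hs
    have h2 := hsum t ht
    have hdiff : schwarzH γ t - schwarzH γ s
        = ∑' n : ℕ, (phiStair γ (2 ^ n * t) / 3 ^ n - phiStair γ (2 ^ n * s) / 3 ^ n) := by
      rw [schwarzH, schwarzH, ← Summable.tsum_sub h2 h1]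
    have hpos : ∀ n : ℕ, 0 ≤ phiStair γ (2 ^ n * t) / 3 ^ n - phiStair γ (2 ^ n * s) / 3 ^ n := by
      intro n
      have h3n : (0:ℝ) < 3 ^ n := by positivity
      have : phiStair γ (2 ^ n * s) ≤ phiStair γ (2 ^ n * t) :=
        (phi_mono hγ0).le_iff_le.2 (by nlinarith [pow_pos (by norm_num : (0:ℝ) < 2) n])
      have := div_le_div_of_nonneg_right this h3n.le
      linarith
    have hterm0 : (0:ℝ) < phiStair γ (2 ^ 0 * t) / 3 ^ 0 - phiStair γ (2 ^ 0 * s) / 3 ^ 0 := by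
      simp only [pow_zero, one_mul, div_one]
      exact sub_pos.2 (phi_mono hγ0 hst)
    have hle := Summable.le_tsum (h2.sub h1) 0 (fun j _ => hpos j)
    have : 0 < schwarzH γ t - schwarzH γ s := by
      rw [hdiff]; exact lt_of_lt_of_le hterm0 hle
    linarith
  · -- Hölder bound
    refine ⟨9, by norm_num, fun s h hs hh => ?_⟩
    set M := max (h ^ γ) h with hM
    have hM0 : 0 < M := lt_of_lt_of_le hh (le_max_right _ _)
    have h1 := hsum s hs
    have h2 := hsum (s + h) (by linarith)
    have hdiff : schwarzH γ (s + h) - schwarzH γ s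
        = ∑' n : ℕ, (phiStair γ (2 ^ n * (s + h)) / 3 ^ n - phiStair γ (2 ^ n * s) / 3 ^ n) := by
      rw [schwarzH, schwarzH, ← Summable.tsum_sub h2 h1]
    have hbound : ∀ n : ℕ,
        phiStair γ (2 ^ n * (s + h)) / 3 ^ n - phiStair γ (2 ^ n * s) / 3 ^ n
          ≤ 3 * M * ((2:ℝ)/3) ^ n := by
      intro n
      have h2n : (0:ℝ) < 2 ^ n := by positivity
      have h3n : (0:ℝ) < 3 ^ n := by positivity
      have hkey := phi_holder hγ0 hγ1 (2 ^ n * s) (2 ^ n * h) (by positivity)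
      rw [← mul_add] at hkey
      have hmax : max ((2 ^ n * h) ^ γ) (2 ^ n * h) ≤ 2 ^ n * M := by
        apply max_le
        · have e1 : ((2:ℝ) ^ n * h) ^ γ = ((2:ℝ) ^ n) ^ γ * h ^ γ :=
            Real.mul_rpow h2n.le hh.le
          have e2 : ((2:ℝ) ^ n) ^ γ ≤ (2:ℝ) ^ n := by
            calc ((2:ℝ) ^ n) ^ γ ≤ ((2:ℝ) ^ n) ^ (1:ℝ) :=
                  Real.rpow_le_rpow_of_exponent_le (one_le_pow₀ (by norm_num)) hγ1.le
              _ = (2:ℝ) ^ n := Real.rpow_one _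
          have e3 : (0:ℝ) ≤ h ^ γ := Real.rpow_nonneg hh.le _
          calc ((2:ℝ) ^ n * h) ^ γ = ((2:ℝ) ^ n) ^ γ * h ^ γ := e1
            _ ≤ 2 ^ n * h ^ γ := by nlinarith
            _ ≤ 2 ^ n * M := by
                have := le_max_left (h ^ γ) h; nlinarith
        · have := le_max_right (h ^ γ) h
          nlinarith
      have hkey2 : phiStair γ (2 ^ n * (s + h)) - phiStair γ (2 ^ n * s)
          ≤ 3 * (2 ^ n * M) := by
        calc phiStair γ (2 ^ n * (s + h)) - phiStair γ (2 ^ n * s)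
            ≤ 3 * max ((2 ^ n * h) ^ γ) (2 ^ n * h) := hkey
          _ ≤ 3 * (2 ^ n * M) := by linarith
      have := div_le_div_of_nonneg_right hkey2 h3n.le
      calc phiStair γ (2 ^ n * (s + h)) / 3 ^ n - phiStair γ (2 ^ n * s) / 3 ^ n
          = (phiStair γ (2 ^ n * (s + h)) - phiStair γ (2 ^ n * s)) / 3 ^ n := by ring
        _ ≤ 3 * (2 ^ n * M) / 3 ^ n := this
        _ = 3 * M * ((2:ℝ)/3) ^ n := by rw [div_pow]; field_simp
    have hsum3 : Summable fun n : ℕ => 3 * M * ((2:ℝ)/3) ^ n := hgeo.mul_left _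
    have htsum_le : schwarzH γ (s + h) - schwarzH γ s ≤ ∑' n : ℕ, 3 * M * ((2:ℝ)/3) ^ n := by
      rw [hdiff]
      exact Summable.tsum_le_tsum hbound (h2.sub h1) hsum3
    have hgeoval : ∑' n : ℕ, ((2:ℝ)/3) ^ n = 3 := by
      rw [tsum_geometric_of_lt_one (by norm_num) (by norm_num)]; norm_num
    have hval : ∑' n : ℕ, 3 * M * ((2:ℝ)/3) ^ n = 9 * M := by
      rw [tsum_mul_left, hgeoval]; ring
    have hnn : 0 ≤ schwarzH γ (s + h) - schwarzH γ s := by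
      rw [hdiff]
      refine tsum_nonneg fun n => ?_
      have h3n : (0:ℝ) < 3 ^ n := by positivity
      have : phiStair γ (2 ^ n * s) ≤ phiStair γ (2 ^ n * (s + h)) :=
        (phi_mono hγ0).le_iff_le.2 (by nlinarith [pow_pos (by norm_num : (0:ℝ) < 2) n])
      have := div_le_div_of_nonneg_right this h3n.le
      linarith
    rw [abs_of_nonneg hnn]
    calc schwarzH γ (s + h) - schwarzH γ s ≤ ∑' n : ℕ, 3 * M * ((2:ℝ)/3) ^ n := htsum_le
      _ = 9 * M := hval
end

section
/- Let γ ∈ (0,1), φ(s) := ⌊s⌋ + {s}^γ, and H₀(s) := Σ_{n=0}^∞ φ(2ⁿ s)/3ⁿ. Then for all j, m ∈ ℕ, setting s = j·2^{−m}, one has for every h ∈ (0, 2^{−m}): H₀(s + h) − H₀(s) ≥ 3^{−m}(2^m h)^γ. Consequently, for every γ' ∈ (γ, 1] and every nondegenerate interval I ⊂ [0, ∞), H₀ is not Hölder continuous with exponent γ' on I (the dyadic rationals being dense, the difference quotient (H₀(s+h) − H₀(s))/h^{γ'} is unbounded as h → 0⁺ at every dyadic point s). -/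
/-!
Every term `φ(2ⁿ s)/3ⁿ` of `H₀` is nondecreasing, so an increment of `H₀` dominates the
increment of any single term. At a dyadic point `s = j/2ᵐ` the `m`-th term sits at the integer
`j`, where `φ` rises like `x ↦ x^γ`; this gives `H₀(s+h) - H₀(s) ≥ (2ᵐh)^γ/3ᵐ`. Every interval
contains a dyadic interval `[j/2ᵐ, (j+1)/2ᵐ]`, so a `γ'`-Hölder bound would give
`C h^{γ'-γ} ≥ (2ᵐ)^γ/3ᵐ > 0` for all small `h > 0`, which fails as `h → 0`.
-/

open Filter Set Topology

lemma not_exists_holder_bound_of_le_sub {f : ℝ → ℝ} {s δ K γ γ' : ℝ} (hδ : 0 < δ)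
    (hK : 0 < K) (hγγ' : γ < γ') (hlow : ∀ h ∈ Ioo 0 δ, K * h ^ γ ≤ f (s + h) - f s) :
    ¬ ∃ C : ℝ, ∀ h ∈ Ioo 0 δ, |f (s + h) - f s| ≤ C * h ^ γ' := by
  rintro ⟨C, hC⟩
  have hsmall : ∀ᶠ h in 𝓝[>] (0 : ℝ), C * h ^ (γ' - γ) < K := by
    have hcont : ContinuousAt (fun h : ℝ => C * h ^ (γ' - γ)) 0 :=
      (Real.continuousAt_rpow_const 0 _ (Or.inr (sub_pos.2 hγγ').le)).const_mul C
    have hzero : C * (0 : ℝ) ^ (γ' - γ) = 0 := by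
      rw [Real.zero_rpow (sub_pos.2 hγγ').ne', mul_zero]
    exact (hcont.tendsto.mono_left nhdsWithin_le_nhds).eventually_lt_const (by rwa [hzero])
  have hmem : ∀ᶠ h in 𝓝[>] (0 : ℝ), h ∈ Ioo 0 δ := Ioo_mem_nhdsGT hδ
  obtain ⟨h, hlt, hh⟩ := (hsmall.and hmem).exists
  have hγ'split : h ^ γ' = h ^ (γ' - γ) * h ^ γ := by
    rw [← Real.rpow_add hh.1, sub_add_cancel]
  have hpos : 0 < h ^ γ := Real.rpow_pos_of_pos hh.1 γ
  have : K * h ^ γ ≤ C * h ^ (γ' - γ) * h ^ γ := calc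
    K * h ^ γ ≤ f (s + h) - f s := hlow h hh
    _ ≤ |f (s + h) - f s| := le_abs_self _
    _ ≤ C * h ^ γ' := hC h hh
    _ = C * h ^ (γ' - γ) * h ^ γ := by rw [hγ'split, mul_assoc]
  exact (lt_irrefl _) (this.trans_lt (mul_lt_mul_of_pos_right hlt hpos))

lemma exists_dyadic_Icc_subset {a b : ℝ} (ha : 0 ≤ a) (hab : a < b) :
    ∃ j m : ℕ, a ≤ j / 2 ^ m ∧ (j + 1) / 2 ^ m ≤ b := by
  obtain ⟨m, hm⟩ :=
    exists_pow_lt_of_lt_one (half_pos (sub_pos.2 hab)) (by norm_num : (2⁻¹ : ℝ) < 1)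
  have h2m : (0 : ℝ) < 2 ^ m := by positivity
  refine ⟨⌈a * 2 ^ m⌉₊, m, (le_div_iff₀ h2m).2 (Nat.le_ceil _), ?_⟩
  have hceil : (⌈a * 2 ^ m⌉₊ : ℝ) < a * 2 ^ m + 1 := Nat.ceil_lt_add_one (by positivity)
  rw [inv_pow, inv_lt_iff_one_lt_mul₀ h2m] at hm
  rw [div_le_iff₀ h2m]
  nlinarith

section Staircase

variable {γ : ℝ}

lemma phiStair_monotone (hγ : 0 ≤ γ) : Monotone (phiStair γ) := by
  intro s t hst
  rcases (Int.floor_mono hst).eq_or_lt with hfloor | hfloor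
  · have hfract : Int.fract s ≤ Int.fract t := by
      rw [Int.fract, Int.fract, hfloor]
      linarith
    rw [phiStair, phiStair, hfloor]
    gcongr
  · have hs : Int.fract s ^ γ ≤ 1 :=
      Real.rpow_le_one (Int.fract_nonneg s) (Int.fract_lt_one s).le hγ
    have ht : 0 ≤ Int.fract t ^ γ := Real.rpow_nonneg (Int.fract_nonneg t) γ
    have : (⌊s⌋ : ℝ) + 1 ≤ ⌊t⌋ := by exact_mod_cast hfloor
    rw [phiStair, phiStair]
    linarith

lemma phiStair_nonneg {s : ℝ} (hs : 0 ≤ s) : 0 ≤ phiStair γ s :=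
  add_nonneg (by exact_mod_cast Int.floor_nonneg.2 hs) (Real.rpow_nonneg (Int.fract_nonneg s) γ)

lemma phiStair_le_add_one (hγ : 0 ≤ γ) (s : ℝ) : phiStair γ s ≤ s + 1 :=
  add_le_add (Int.floor_le s) (Real.rpow_le_one (Int.fract_nonneg s) (Int.fract_lt_one s).le hγ)

lemma phiStair_natCast_add (j : ℕ) {x : ℝ} (hx : x ∈ Ico 0 1) :
    phiStair γ (j + x) = j + x ^ γ := by
  rw [phiStair, add_comm (j : ℝ) x, Int.floor_add_natCast, Int.fract_add_natCast,
    Int.fract_eq_self.2 hx, Int.floor_eq_zero_iff.2 hx]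
  push_cast
  ring

lemma phiStair_natCast (hγ : γ ≠ 0) (j : ℕ) : phiStair γ j = j := by
  simpa [Real.zero_rpow hγ] using phiStair_natCast_add (γ := γ) j (x := 0) (by simp)

lemma summable_phiStair_div (hγ : 0 ≤ γ) {s : ℝ} (hs : 0 ≤ s) :
    Summable fun n : ℕ => phiStair γ (2 ^ n * s) / 3 ^ n := by
  have hgeom : Summable fun n : ℕ => s * (2 / 3 : ℝ) ^ n + (1 / 3 : ℝ) ^ n :=
    ((summable_geometric_of_lt_one (by norm_num) (by norm_num)).mul_left s).add
      (summable_geometric_of_lt_one (by norm_num) (by norm_num))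
  refine hgeom.of_nonneg_of_le (fun n => div_nonneg (phiStair_nonneg (by positivity))
    (by positivity)) fun n => ?_
  calc phiStair γ (2 ^ n * s) / 3 ^ n ≤ (2 ^ n * s + 1) / 3 ^ n := by
        gcongr
        exact phiStair_le_add_one hγ _
    _ = s * (2 / 3 : ℝ) ^ n + (1 / 3 : ℝ) ^ n := by
        rw [div_pow, div_pow, one_pow, add_div, mul_comm ((2 : ℝ) ^ n) s, mul_div_assoc]

lemma phiStair_div_sub_le_schwarzH_sub (hγ : 0 ≤ γ) {s t : ℝ} (hs : 0 ≤ s) (hst : s ≤ t)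
    (n : ℕ) :
    phiStair γ (2 ^ n * t) / 3 ^ n - phiStair γ (2 ^ n * s) / 3 ^ n ≤
      schwarzH γ t - schwarzH γ s := by
  have ht := summable_phiStair_div hγ (hs.trans hst)
  have hs := summable_phiStair_div hγ hs
  rw [schwarzH, schwarzH, ← ht.tsum_sub hs]
  refine (ht.sub hs).le_tsum n fun k _ => sub_nonneg.2 ?_
  gcongr
  exact phiStair_monotone hγ (by gcongr)

lemma le_schwarzH_dyadic_add_sub (hγ : 0 < γ) (j m : ℕ) {h : ℝ} (h0 : 0 ≤ h)
    (h1 : h < (2 ^ m)⁻¹) :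
    (2 ^ m * h) ^ γ / 3 ^ m ≤ schwarzH γ (j / 2 ^ m + h) - schwarzH γ (j / 2 ^ m) := by
  have h2m : (0 : ℝ) < 2 ^ m := by positivity
  have hx : 2 ^ m * h ∈ Ico (0 : ℝ) 1 :=
    ⟨by positivity, by rwa [← lt_inv_mul_iff₀ h2m, mul_one]⟩
  have hshift : (2 : ℝ) ^ m * (j / 2 ^ m + h) = j + 2 ^ m * h := by field_simp
  have hj : (2 : ℝ) ^ m * (j / 2 ^ m) = j := by field_simp
  calc (2 ^ m * h) ^ γ / 3 ^ m
      = phiStair γ (2 ^ m * (j / 2 ^ m + h)) / 3 ^ m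
          - phiStair γ (2 ^ m * (j / 2 ^ m)) / 3 ^ m := by
        rw [hshift, hj, phiStair_natCast_add j hx, phiStair_natCast hγ.ne']
        ring
    _ ≤ _ := phiStair_div_sub_le_schwarzH_sub hγ.le (by positivity) (by linarith) m

end Staircase

/-- at every dyadic point `s = j·2^{−m}` and for `0 < h < 2^{−m}`,
`H₀(s+h) − H₀(s) ≥ 3^{−m}(2^m h)^γ`; consequently, for any `γ' ∈ (γ,1]`,
`H₀` is not `γ'`-Hölder on any nondegenerate interval of `[0,∞)`. -/
theorem stmt_17 (γ : ℝ) (hγ : γ ∈ Set.Ioo (0:ℝ) 1) :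
    (∀ j m : ℕ, ∀ h : ℝ, 0 < h → h < 2 ^ (-(m : ℝ)) →
      schwarzH γ ((j : ℝ) * 2 ^ (-(m : ℝ)) + h) - schwarzH γ ((j : ℝ) * 2 ^ (-(m : ℝ))) ≥
        3 ^ (-(m : ℝ)) * (2 ^ (m : ℝ) * h) ^ γ) ∧
    (∀ γ' : ℝ, γ < γ' → γ' ≤ 1 → ∀ a b : ℝ, 0 ≤ a → a < b →
      ¬ ∃ C : ℝ, ∀ s₁ ∈ Set.Icc a b, ∀ s₂ ∈ Set.Icc a b,
        |schwarzH γ s₁ - schwarzH γ s₂| ≤ C * |s₁ - s₂| ^ γ') := by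
  have hdyadic : ∀ j m : ℕ, ∀ h : ℝ, 0 < h → h < (2 ^ m)⁻¹ →
      (2 ^ m : ℝ) ^ γ / 3 ^ m * h ^ γ ≤ schwarzH γ (j / 2 ^ m + h) - schwarzH γ (j / 2 ^ m) :=
    fun j m h h0 h1 => by
      simpa [Real.mul_rpow, h0.le, div_mul_eq_mul_div] using
        le_schwarzH_dyadic_add_sub hγ.1 j m h0.le h1
  refine ⟨fun j m h h0 h1 => ?_, fun γ' hγγ' _ a b ha hab => ?_⟩
  · simp only [Real.rpow_neg zero_le_two, Real.rpow_neg zero_le_three, Real.rpow_natCast]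
      at h1 ⊢
    simpa [Real.mul_rpow, h0.le, ← div_eq_mul_inv, div_mul_eq_mul_div, inv_mul_eq_div] using
      hdyadic j m h h0 h1
  · rintro ⟨C, hC⟩
    obtain ⟨j, m, haj, hjb⟩ := exists_dyadic_Icc_subset ha hab
    refine not_exists_holder_bound_of_le_sub (f := schwarzH γ) (s := j / 2 ^ m)
      (by positivity : (0 : ℝ) < (2 ^ m)⁻¹) (by positivity) hγγ'
      (fun h hh => hdyadic j m h hh.1 hh.2) ⟨C, fun h hh => ?_⟩
    have hjh : (j : ℝ) / 2 ^ m + h ≤ b := by rw [add_div, one_div] at hjb; linarith [hh.2]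
    have hj : (j : ℝ) / 2 ^ m ≤ b := by linarith [hh.1]
    simpa [abs_of_pos hh.1] using hC _ ⟨by linarith [hh.1], hjh⟩ _ ⟨haj, hj⟩
end

section
/- There exists a constant C > 0 such that for every real P ≥ 1: Σ_{j=0}^∞ [ (1 + (P + j)²)^{−1} · (1 + j^{1/2})^{−1} ] ≤ C P^{−3/2}. -/
/-!
Split the series at `N = ⌈P⌉`. For `j < N` the first factor is at most `P⁻²`, and
`∑_{j<N} (1 + √j)⁻¹ ≤ 2√N ≤ 2√(2P)` by comparison with the telescoping sum of `√(j+1) - √j`.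
For `j ≥ N` the second factor is at most `P^{-1/2}`, and `(1 + x²)⁻¹ ≤ (x - 1)⁻¹ - x⁻¹`
telescopes to `∑_{j≥N} (1 + (P+j)²)⁻¹ ≤ (P + N - 1)⁻¹ ≤ P⁻¹`.
-/

open Finset Real

lemma inv_one_add_sqrt_le_two_mul_sqrt_add_one_sub {x : ℝ} (hx : 0 ≤ x) :
    (1 + √x)⁻¹ ≤ 2 * (√(x + 1) - √x) := by
  have hsucc : √(x + 1) ≤ √x + 1 := by
    rw [sqrt_le_left (by positivity)]
    nlinarith [sq_sqrt hx, sqrt_nonneg x]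
  have hdiff : (√(x + 1) - √x) * (√(x + 1) + √x) = 1 := by
    nlinarith [sq_sqrt hx, sq_sqrt (show 0 ≤ x + 1 by linarith)]
  rw [inv_le_iff_one_le_mul₀' (by positivity)]
  nlinarith [sqrt_nonneg x, sqrt_le_sqrt (show x ≤ x + 1 by linarith)]

lemma sum_range_inv_one_add_sqrt_le (n : ℕ) :
    ∑ j ∈ range n, (1 + √(j : ℝ))⁻¹ ≤ 2 * √(n : ℝ) := by
  calc ∑ j ∈ range n, (1 + √(j : ℝ))⁻¹
      ≤ ∑ j ∈ range n, 2 * (√((j + 1 : ℕ) : ℝ) - √(j : ℝ)) := by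
        gcongr with j
        push_cast
        exact inv_one_add_sqrt_le_two_mul_sqrt_add_one_sub j.cast_nonneg
    _ = 2 * √(n : ℝ) := by
        rw [← mul_sum, sum_range_sub (fun j : ℕ => √(j : ℝ))]
        simp

lemma inv_one_add_sq_le_inv_sub_one_sub_inv {x : ℝ} (hx : 1 < x) :
    (1 + x ^ 2)⁻¹ ≤ (x - 1)⁻¹ - x⁻¹ := by
  have hx1 : 0 < x - 1 := by linarith
  rw [inv_sub_inv hx1.ne' (by linarith), sub_sub_cancel, one_div]
  exact inv_anti₀ (by positivity) (by nlinarith)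

lemma sum_range_inv_one_add_sq_le {a : ℝ} (ha : 1 < a) (n : ℕ) :
    ∑ k ∈ range n, (1 + (a + k) ^ 2)⁻¹ ≤ (a - 1)⁻¹ := by
  calc ∑ k ∈ range n, (1 + (a + k) ^ 2)⁻¹
      ≤ ∑ k ∈ range n, ((a + k - 1)⁻¹ - (a + (k + 1 : ℕ) - 1)⁻¹) := by
        gcongr with k
        have hk : a + (k + 1 : ℕ) - 1 = a + k := by push_cast; ring
        rw [hk]
        exact inv_one_add_sq_le_inv_sub_one_sub_inv (by linarith [k.cast_nonneg (α := ℝ)])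
    _ = (a - 1)⁻¹ - (a + n - 1)⁻¹ := by
        rw [sum_range_sub' (fun k : ℕ => (a + k - 1)⁻¹)]
        simp
    _ ≤ (a - 1)⁻¹ := by
        have : 0 < a + n - 1 := by linarith [n.cast_nonneg (α := ℝ)]
        linarith [inv_pos.2 this]

section

variable {P : ℝ}

lemma sum_range_head_le (hP : 0 < P) (N : ℕ) :
    ∑ j ∈ range N, (1 + (P + j) ^ 2)⁻¹ * (1 + √(j : ℝ))⁻¹ ≤ 2 * √(N : ℝ) / P ^ 2 := by
  calc ∑ j ∈ range N, (1 + (P + j) ^ 2)⁻¹ * (1 + √(j : ℝ))⁻¹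
      ≤ ∑ j ∈ range N, (P ^ 2)⁻¹ * (1 + √(j : ℝ))⁻¹ := by
        gcongr with j
        nlinarith [j.cast_nonneg (α := ℝ)]
    _ ≤ (P ^ 2)⁻¹ * (2 * √(N : ℝ)) := by
        rw [← mul_sum]
        gcongr
        exact sum_range_inv_one_add_sqrt_le N
    _ = 2 * √(N : ℝ) / P ^ 2 := by ring

lemma sum_range_tail_le (hP : 0 < P) {N : ℕ} (hN : P ≤ N) (n : ℕ) :
    ∑ k ∈ range n, (1 + (P + (N + k : ℕ)) ^ 2)⁻¹ * (1 + √((N + k : ℕ) : ℝ))⁻¹ ≤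
      (√P)⁻¹ * P⁻¹ := by
  have hN1 : (1 : ℝ) ≤ N := Nat.one_le_cast.2 (Nat.cast_pos.1 (hP.trans_le hN))
  calc ∑ k ∈ range n, (1 + (P + (N + k : ℕ)) ^ 2)⁻¹ * (1 + √((N + k : ℕ) : ℝ))⁻¹
      ≤ ∑ k ∈ range n, (1 + (P + N + k) ^ 2)⁻¹ * (√P)⁻¹ := by
        refine sum_le_sum fun k _ => ?_
        have hPk : P ≤ N + k := by linarith [k.cast_nonneg (α := ℝ)]
        push_cast
        rw [← add_assoc]
        gcongr
        linarith [sqrt_le_sqrt hPk]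
    _ ≤ (P + N - 1)⁻¹ * (√P)⁻¹ := by
        rw [← sum_mul]
        gcongr
        exact sum_range_inv_one_add_sq_le (by linarith) n
    _ ≤ (√P)⁻¹ * P⁻¹ := by
        rw [mul_comm]
        gcongr
        linarith

end

lemma rpow_neg_three_halves_eq {P : ℝ} (hP : 0 < P) :
    P ^ (-(3 : ℝ) / 2) = (√P)⁻¹ * P⁻¹ := by
  rw [sqrt_eq_rpow, ← rpow_neg_one P, ← rpow_neg hP.le, ← rpow_add hP]
  norm_num

lemma sum_range_inv_one_add_sq_mul_inv_one_add_sqrt_le {P : ℝ} (hP : 1 ≤ P) (n : ℕ) :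
    ∑ j ∈ range n, (1 + (P + j) ^ 2)⁻¹ * (1 + √(j : ℝ))⁻¹ ≤ 4 * P ^ (-(3 : ℝ) / 2) := by
  have hP0 : 0 < P := by linarith
  set N := ⌈P⌉₊
  have hN : √(N : ℝ) ≤ √2 * √P := by
    rw [← sqrt_mul zero_le_two]
    exact sqrt_le_sqrt (by linarith [Nat.ceil_lt_add_one hP0.le])
  have hsqrtP : √P / P ^ 2 = (√P)⁻¹ * P⁻¹ := by
    field_simp
    rw [sq_sqrt hP0.le]
  have hsqrt2 : √2 < 3 / 2 := by
    rw [sqrt_lt' (by norm_num)]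
    norm_num
  calc ∑ j ∈ range n, (1 + (P + j) ^ 2)⁻¹ * (1 + √(j : ℝ))⁻¹
      ≤ ∑ j ∈ range (N + n), (1 + (P + j) ^ 2)⁻¹ * (1 + √(j : ℝ))⁻¹ :=
        sum_le_sum_of_subset_of_nonneg (range_mono (by omega)) fun _ _ _ => by positivity
    _ ≤ 2 * √(N : ℝ) / P ^ 2 + (√P)⁻¹ * P⁻¹ := by
        rw [sum_range_add]
        exact add_le_add (sum_range_head_le hP0 N) (sum_range_tail_le hP0 (Nat.le_ceil P) n)
    _ ≤ 2 * (√2 * √P) / P ^ 2 + (√P)⁻¹ * P⁻¹ := by gcongr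
    _ = (2 * √2 + 1) * ((√P)⁻¹ * P⁻¹) := by
        rw [← hsqrtP]; ring
    _ ≤ 4 * P ^ (-(3 : ℝ) / 2) := by
        rw [rpow_neg_three_halves_eq hP0]
        gcongr
        linarith

/-- there is `C > 0` such that for all `P ≥ 1`,
`Σ_{j≥0} (1+(P+j)²)⁻¹(1+j^{1/2})⁻¹ ≤ C·P^{−3/2}` (the series being summable). -/
theorem stmt_18 :
    ∃ C : ℝ, 0 < C ∧ ∀ P : ℝ, 1 ≤ P →
      Summable (fun j : ℕ => (1 + (P + (j : ℝ)) ^ 2)⁻¹ * (1 + (j : ℝ) ^ ((1:ℝ)/2))⁻¹) ∧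
      ∑' j : ℕ, (1 + (P + (j : ℝ)) ^ 2)⁻¹ * (1 + (j : ℝ) ^ ((1:ℝ)/2))⁻¹ ≤
        C * P ^ (-(3:ℝ)/2) := by
  refine ⟨4, by norm_num, fun P hP => ?_⟩
  simp only [← sqrt_eq_rpow]
  have hnonneg : ∀ j : ℕ, 0 ≤ (1 + (P + j) ^ 2)⁻¹ * (1 + √(j : ℝ))⁻¹ := fun j => by positivity
  have hbound := sum_range_inv_one_add_sq_mul_inv_one_add_sqrt_le hP
  exact ⟨summable_of_sum_range_le hnonneg hbound, Real.tsum_le_of_sum_range_le hnonneg hbound⟩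
end
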